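/- arXiv:2301.00784 — 7 statements merged into one kernel-verified Lean document; each statement's English description precedes it below -/
import Mathlib

section
/- Let m = Δ_1 + ⋯ + Δ_N be a multisegment and let Δ_0 be a segment such that the multisegment Δ_0 + m is regular. Then: (1) LC(Δ_0, m) holds if and only if there is no index i with Δ_0 ≺ Δ_i; (2) RC(Δ_0, m) holds if and only if there is no index i with Δ_i ≺ Δ_0. -/
/-- A segment `[a;b]` is a pair of integers `a ≤ b`. -/
structure Segment where
  a : ℤ
  b : ℤ
  le : a ≤ b

namespace Segment

/-- `Δ ≺ Δ'` : the segment `Δ = [a;b]` precedes `Δ' = [c;d]`,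
i.e. `a < c`, `c - 1 ≤ b` and `b < d`. -/
def prec (Δ Δ' : Segment) : Prop :=
  Δ.a < Δ'.a ∧ Δ'.a - 1 ≤ Δ.b ∧ Δ.b < Δ'.b

/-- `←Δ = [a-1; b-1]`. -/
def shift (Δ : Segment) : Segment :=
  ⟨Δ.a - 1, Δ.b - 1, by have := Δ.le; omega⟩

instance (Δ Δ' : Segment) : Decidable (Δ.prec Δ') := by
  unfold prec; infer_instance

end Segment

/-- A multisegment (given as an indexed family of segments) is regular if the beginnings
of its segments are pairwise distinct and the ends of its segments are pairwise distinct. -/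
def Regular {ι : Type*} (Δ : ι → Segment) : Prop :=
  (∀ i j : ι, (Δ i).a = (Δ j).a → i = j) ∧ (∀ i j : ι, (Δ i).b = (Δ j).b → i = j)

/-- The condition `LC(Δ₀, m)` : there is an injective function
`f : X_{Δ₀,m} → Y_{Δ₀,m}` with `Δ_{f i} ≺ Δ_i` for all `i ∈ X_{Δ₀,m}`,
where `X_{Δ₀,m} = {i | Δ₀ ≺ Δ_i}` and `Y_{Δ₀,m} = {i | ←Δ₀ ≺ Δ_i}`. -/
def LC {ι : Type*} (Δ₀ : Segment) (Δ : ι → Segment) : Prop :=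
  ∃ f : ι → ι, Set.InjOn f {i | Δ₀.prec (Δ i)} ∧
    ∀ i : ι, Δ₀.prec (Δ i) → Δ₀.shift.prec (Δ (f i)) ∧ (Δ (f i)).prec (Δ i)

/-- The condition `RC(Δ₀, m)` : there is an injective function
`f : X̃_{Δ₀,m} → Ỹ_{Δ₀,m}` with `Δ_i ≺ Δ_{f i}` for all `i ∈ X̃_{Δ₀,m}`,
where `X̃_{Δ₀,m} = {i | Δ_i ≺ Δ₀}` and `Ỹ_{Δ₀,m} = {i | ←Δ_i ≺ Δ₀}`. -/
def RC {ι : Type*} (Δ₀ : Segment) (Δ : ι → Segment) : Prop :=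
  ∃ f : ι → ι, Set.InjOn f {i | (Δ i).prec Δ₀} ∧
    ∀ i : ι, (Δ i).prec Δ₀ → (Δ (f i)).shift.prec Δ₀ ∧ (Δ i).prec (Δ (f i))

/-!
Regularity of `Δ₀ + m` upgrades `←Δ₀ ≺ Δᵢ` to `Δ₀ ≺ Δᵢ`, i.e. `Y ⊆ X`. A witness of `LC(Δ₀, m)`
therefore maps the finite set `X` into itself while strictly decreasing the ends of the segments,
which forces `X = ∅`. Symmetrically `Ỹ ⊆ X̃`, and a witness of `RC(Δ₀, m)` strictly increases ends.
-/

theorem Set.Finite.eq_empty_of_mapsTo_of_lt {ι β : Type*} [LinearOrder β] {s : Set ι}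
    (hs : s.Finite) {f : ι → ι} {g : ι → β} (hmaps : Set.MapsTo f s s)
    (hlt : ∀ i ∈ s, g (f i) < g i) : s = ∅ := by
  by_contra hne
  obtain ⟨j, hj, hmin⟩ := Set.exists_min_image s g hs (Set.nonempty_iff_ne_empty.mpr hne)
  exact (hmin (f j) (hmaps hj)).not_gt (hlt j hj)

namespace Segment

theorem prec_of_shift_prec {Δ Δ' : Segment} (h : Δ.shift.prec Δ') (ha : Δ.a ≠ Δ'.a)
    (hb : Δ.b ≠ Δ'.b) : Δ.prec Δ' := by
  obtain ⟨h₁, h₂, h₃⟩ := h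
  simp only [shift] at h₁ h₂ h₃
  exact ⟨by omega, by omega, by omega⟩

end Segment

section

variable {ι : Type*} [Finite ι] {Δ₀ : Segment} {Δ : ι → Segment}

theorem lc_iff_not_exists_prec (ha : ∀ i, Δ₀.a ≠ (Δ i).a) (hb : ∀ i, Δ₀.b ≠ (Δ i).b) :
    LC Δ₀ Δ ↔ ¬ ∃ i, Δ₀.prec (Δ i) := by
  refine ⟨fun ⟨f, _, hf⟩ => ?_, fun h => ⟨id, Set.injOn_id _, fun i hi => (h ⟨i, hi⟩).elim⟩⟩
  rintro ⟨i, hi⟩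
  have hX : {i | Δ₀.prec (Δ i)} = ∅ :=
    (Set.toFinite _).eq_empty_of_mapsTo_of_lt (f := f) (g := fun i => (Δ i).b)
      (fun j hj => Segment.prec_of_shift_prec (hf j hj).1 (ha _) (hb _))
      (fun j hj => (hf j hj).2.2.2)
  exact Set.eq_empty_iff_forall_notMem.mp hX i hi

theorem rc_iff_not_exists_prec (ha : ∀ i, Δ₀.a ≠ (Δ i).a) (hb : ∀ i, Δ₀.b ≠ (Δ i).b) :
    RC Δ₀ Δ ↔ ¬ ∃ i, (Δ i).prec Δ₀ := by
  refine ⟨fun ⟨f, _, hf⟩ => ?_, fun h => ⟨id, Set.injOn_id _, fun i hi => (h ⟨i, hi⟩).elim⟩⟩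
  rintro ⟨i, hi⟩
  have hX : {i | (Δ i).prec Δ₀} = ∅ :=
    (Set.toFinite _).eq_empty_of_mapsTo_of_lt (f := f) (g := fun i => OrderDual.toDual (Δ i).b)
      (fun j hj => Segment.prec_of_shift_prec (hf j hj).1 (ha _).symm (hb _).symm)
      (fun j hj => (hf j hj).2.2.2)
  exact Set.eq_empty_iff_forall_notMem.mp hX i hi

end

theorem Regular.cons_ne {N : ℕ} {Δ₀ : Segment} {Δ : Fin N → Segment}
    (hreg : Regular (Fin.cons Δ₀ Δ : Fin (N + 1) → Segment)) :
    (∀ i, Δ₀.a ≠ (Δ i).a) ∧ ∀ i, Δ₀.b ≠ (Δ i).b :=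
  ⟨fun i h => Fin.succ_ne_zero i (hreg.1 i.succ 0 (by simpa using h.symm)),
    fun i h => Fin.succ_ne_zero i (hreg.2 i.succ 0 (by simpa using h.symm))⟩

/-- Lemma 3.2 (lemLcRCvide): if `Δ₀ + m` is a regular multisegment then `LC(Δ₀, m)` holds
iff no segment of `m` is preceded by `Δ₀`, and `RC(Δ₀, m)` holds iff no segment of `m`
precedes `Δ₀`. -/
theorem statement0 {N : ℕ} (Δ₀ : Segment) (Δ : Fin N → Segment)
    (hreg : Regular (Fin.cons Δ₀ Δ : Fin (N + 1) → Segment)) :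
    (LC Δ₀ Δ ↔ ¬ ∃ i : Fin N, Δ₀.prec (Δ i)) ∧
    (RC Δ₀ Δ ↔ ¬ ∃ i : Fin N, (Δ i).prec Δ₀) :=
  have ⟨ha, hb⟩ := hreg.cons_ne
  ⟨lc_iff_not_exists_prec ha hb, rc_iff_not_exists_prec ha hb⟩
end

section
/- Let m = Δ_1 + ⋯ + Δ_N be a regular multisegment with Δ_i = [a_i; b_i] and b_1 > b_2 > ⋯ > b_N. Fix i with X_{Δ_i,m} nonempty and write X_{Δ_i,m} = {j_1 > j_2 > ⋯ > j_m}. If f : X_{Δ_i,m} → Y_{Δ_i,m} is any injective function satisfying Δ_{f(j)} ≺ Δ_j for all j ∈ X_{Δ_i,m}, then necessarily f(j_1) = i and f(j_{ℓ+1}) = j_ℓ for all 1 ≤ ℓ ≤ m−1. -/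
/-!
Since the ends decrease along `m`, `Δ_{f(j)} ≺ Δ_j` forces `f(j)` to have a larger index than
`j`; by regularity, a segment of `Y_{Δ_i,m}` other than `Δ_i` lies in `X_{Δ_i,m}`. So `f` sends
`j_ℓ` into `{i, j_1, …, j_{ℓ-1}}`, and injectivity leaves no choice but `f(j_1) = i` and
`f(j_{ℓ+1}) = j_ℓ`.
-/

theorem Segment.prec_of_shift_prec_s3 {Δ₀ Δ : Segment} (h : Δ₀.shift.prec Δ)
    (ha : Δ.a ≠ Δ₀.a) (hb : Δ.b ≠ Δ₀.b) : Δ₀.prec Δ := by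
  obtain ⟨h₁, h₂, h₃⟩ := h
  simp only [Segment.shift] at h₁ h₂ h₃
  exact ⟨by omega, by omega, by omega⟩

theorem Regular.eq_or_prec_of_shift_prec {ι : Type*} {Δ : ι → Segment} (hreg : Regular Δ)
    {i k : ι} (h : (Δ i).shift.prec (Δ k)) : k = i ∨ (Δ i).prec (Δ k) := by
  by_cases hki : k = i
  · exact Or.inl hki
  · exact Or.inr <| Segment.prec_of_shift_prec_s3 h (fun ha => hki (hreg.1 _ _ ha))
      (fun hb => hki (hreg.2 _ _ hb))

theorem Fin.apply_zero_eq_and_apply_succ_eq_of_injective {α : Type*} {M : ℕ} (hM : 0 < M)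
    (j g : Fin M → α) (x : α) (hg : Function.Injective g)
    (hmap : ∀ l, g l = x ∨ ∃ l' < l, g l = j l') :
    g ⟨0, hM⟩ = x ∧
      ∀ (l : ℕ) (h : l + 1 < M), g ⟨l + 1, h⟩ = j ⟨l, Nat.lt_of_succ_lt h⟩ := by
  have hzero : g ⟨0, hM⟩ = x := by
    rcases hmap ⟨0, hM⟩ with hx | ⟨l', hl', -⟩
    · exact hx
    · exact absurd (Fin.lt_def.1 hl') (Nat.not_lt_zero _)
  refine ⟨hzero, fun l => ?_⟩
  induction l using Nat.strong_induction_on with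
  | _ l ih =>
    intro h
    rcases hmap ⟨l + 1, h⟩ with hx | ⟨l', hl', hgl⟩
    · exact absurd (Fin.mk.inj (hg (hx.trans hzero.symm))) (Nat.succ_ne_zero l)
    · rw [hgl]
      rcases Nat.lt_succ_iff_lt_or_eq.1 (Fin.lt_def.1 hl') with hlt | heq
      · have := Fin.mk.inj (hg ((ih l' hlt (by omega)).trans hgl.symm))
        omega
      · exact congrArg j (Fin.ext heq)

/-- For an ordered regular multisegment `m = Δ_1 + ⋯ + Δ_N` (with `b_1 > ⋯ > b_N`), fix `i`
with `X_{Δ_i,m}` nonempty, enumerated as `X_{Δ_i,m} = {j_1 > j_2 > ⋯ > j_M}` (here `j`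
is a strictly decreasing enumeration). Then any injective function
`f : X_{Δ_i,m} → Y_{Δ_i,m}` with `Δ_{f(j)} ≺ Δ_j` on `X_{Δ_i,m}` satisfies `f(j_1) = i`
and `f(j_{ℓ+1}) = j_ℓ` for all `1 ≤ ℓ ≤ M - 1`. -/
theorem statement3 {N M : ℕ} (Δ : Fin N → Segment) (hreg : Regular Δ)
    (hb : ∀ i j : Fin N, i < j → (Δ j).b < (Δ i).b)
    (i : Fin N) (hM : 0 < M)
    (j : Fin M → Fin N) (hjanti : StrictAnti j)
    (hjrange : ∀ k : Fin N, (Δ i).prec (Δ k) ↔ ∃ l : Fin M, j l = k)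
    (f : Fin N → Fin N)
    (hfinj : Set.InjOn f {k | (Δ i).prec (Δ k)})
    (hf : ∀ k : Fin N, (Δ i).prec (Δ k) →
      (Δ i).shift.prec (Δ (f k)) ∧ (Δ (f k)).prec (Δ k)) :
    f (j ⟨0, hM⟩) = i ∧
    ∀ (l : ℕ) (h : l + 1 < M), f (j ⟨l + 1, h⟩) = j ⟨l, by omega⟩ := by
  have hb : StrictAnti fun k => (Δ k).b := hb
  have hX : ∀ l, (Δ i).prec (Δ (j l)) := fun l => (hjrange _).2 ⟨l, rfl⟩
  refine Fin.apply_zero_eq_and_apply_succ_eq_of_injective hM j (f ∘ j) i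
    (fun l l' h => hjanti.injective (hfinj (hX l) (hX l') h)) fun l => ?_
  obtain ⟨hY, hprec⟩ := hf _ (hX l)
  refine (hreg.eq_or_prec_of_shift_prec hY).imp id fun hX' => ?_
  obtain ⟨l', hl'⟩ := (hjrange _).1 hX'
  have hlt : j l < j l' := hl' ▸ hb.lt_iff_gt.1 hprec.2.2
  exact ⟨l', hjanti.lt_iff_gt.1 hlt, hl'.symm⟩
end

section
/- Let m be a regular multisegment and Δ a segment occurring in m. Then the three conditions LC(Δ, m), RC(Δ, m) and LC(Δ, m∖Δ) all hold if and only if Δ precedes no other segment of m and the multisegment consisting of Δ together with all segments of m that precede Δ is a ladder. -/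
/-- The sub-multisegment of `Δ` indexed by the finite set `S` is a ladder: its segments can
be enumerated so that both the beginnings and the ends are strictly decreasing. -/
def IsLadder {ι : Type*} (Δ : ι → Segment) (S : Finset ι) : Prop :=
  ∃ e : Fin S.card ≃ {x // x ∈ S}, ∀ k l : Fin S.card, k < l →
    (Δ (e l).val).a < (Δ (e k).val).a ∧ (Δ (e l).val).b < (Δ (e k).val).b

/-!
If `LC(Δ, m∖Δ)` held while `Δ ≺ Δ'` for some other `Δ'` of `m`, its injection would send `Δ'` to a
segment of `m∖Δ` that is again preceded by `Δ` (regularity) and ends strictly earlier, an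
infinite descent. `RC(Δ, m)` injects the segments preceding `Δ` into those segments together with
`Δ`, each one going to a segment it precedes, so strictly up in ends and in beginnings; by
pigeonhole such an injection is the successor map for the order by ends, hence beginnings and
ends increase together and we have a ladder. Conversely, on a ladder the successor map witnesses
`RC`, while the `LC` conditions are vacuous once `Δ` precedes nothing.
-/

namespace Segment

theorem prec_irrefl (Δ : Segment) : ¬ Δ.prec Δ := fun h => h.1.ne rfl

end Segment

section Successor

variable {ι : Type*} [DecidableEq ι] {X : Finset ι} {top : ι} {f : ι → ι} {φ : ι → ℤ}

theorem lt_apply_top_of_lt_apply (hmaps : ∀ i ∈ X, f i ∈ insert top X)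
    (hlt : ∀ i ∈ X, φ i < φ (f i)) {i : ι} (hi : i ∈ X) : φ i < φ top := by
  obtain ⟨m, hm, hmax⟩ := (insert top X).exists_max_image φ ⟨i, Finset.mem_insert_of_mem hi⟩
  rcases Finset.mem_insert.1 hm with rfl | hmX
  · exact (hlt i hi).trans_le (hmax _ (hmaps i hi))
  · exact absurd ((hlt m hmX).trans_le (hmax _ (hmaps m hmX))) (lt_irrefl _)

/-- Pigeonhole: `f` maps `i` together with the elements of `X` above `i` injectively onto the
elements of `insert top X` above `i`, so the lowest of these is `f i`. -/
theorem apply_le_of_injOn_of_lt_apply (hmaps : ∀ i ∈ X, f i ∈ insert top X)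
    (hinj : Set.InjOn f X) (hlt : ∀ i ∈ X, φ i < φ (f i)) {i j : ι} (hi : i ∈ X)
    (hj : j ∈ insert top X) (hij : φ i < φ j) : φ (f i) ≤ φ j := by
  set U := (insert top X).filter (φ i < φ ·)
  have htopU : top ∈ U :=
    Finset.mem_filter.2 ⟨Finset.mem_insert_self _ _, lt_apply_top_of_lt_apply hmaps hlt hi⟩
  obtain ⟨m, hmU, hmin⟩ := U.exists_min_image φ ⟨top, htopU⟩
  set D : Finset ι := insert i (U.erase top)
  have hiU : i ∉ U := fun h => lt_irrefl _ (Finset.mem_filter.1 h).2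
  have hDX : D ⊆ X := by
    intro x hx
    rcases Finset.mem_insert.1 hx with rfl | hx
    · exact hi
    · obtain ⟨hxtop, hxU⟩ := Finset.mem_erase.1 hx
      exact (Finset.mem_insert.1 (Finset.mem_filter.1 hxU).1).resolve_left hxtop
  have hmapsU : Set.MapsTo f D U := by
    intro x hx
    refine Finset.mem_filter.2 ⟨hmaps x (hDX hx), ?_⟩
    rcases Finset.mem_insert.1 hx with rfl | hx
    · exact hlt x hi
    · exact (Finset.mem_filter.1 (Finset.mem_erase.1 hx).2).2.trans
        (hlt x (hDX (Finset.mem_insert_of_mem hx)))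
  have hcard : U.card ≤ D.card := by
    rw [Finset.card_insert_of_notMem (fun h => hiU (Finset.mem_of_mem_erase h)),
      Finset.card_erase_of_mem htopU]
    omega
  obtain ⟨d, hd, hdm⟩ :=
    Finset.surjOn_of_injOn_of_card_le f hmapsU (hinj.mono (by exact_mod_cast hDX)) hcard hmU
  rcases Finset.mem_insert.1 hd with rfl | hd
  · exact hdm ▸ hmin j (Finset.mem_filter.2 ⟨hj, hij⟩)
  · have hdU := (Finset.mem_erase.1 hd).2
    have hlt_d := hlt d (hDX (Finset.mem_insert_of_mem hd))
    exact absurd (hdm ▸ (hmin d hdU).trans_lt hlt_d) (lt_irrefl _)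

theorem lt_of_injOn_of_lt_apply {ψ : ι → ℤ} (hmaps : ∀ i ∈ X, f i ∈ insert top X)
    (hinj : Set.InjOn f X) (hlt : ∀ i ∈ X, φ i < φ (f i)) (hψ : ∀ i ∈ X, ψ i < ψ (f i))
    (hφ : Set.InjOn φ ((insert top X : Finset ι) : Set ι)) {i j : ι} (hi : i ∈ insert top X)
    (hj : j ∈ insert top X) (hij : φ i < φ j) : ψ i < ψ j := by
  induction hn : (φ j - φ i).toNat using Nat.strong_induction_on generalizing i with
  | _ n ih =>
    have hiX : i ∈ X := by
      refine (Finset.mem_insert.1 hi).resolve_left ?_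
      rintro rfl
      rcases Finset.mem_insert.1 hj with rfl | hjX
      · exact lt_irrefl _ hij
      · exact lt_asymm hij (lt_apply_top_of_lt_apply hmaps hlt hjX)
    rcases (apply_le_of_injOn_of_lt_apply hmaps hinj hlt hiX hj hij).lt_or_eq with hfj | hfj
    · exact (hψ i hiX).trans (ih _ (by have := hlt i hiX; omega) (hmaps i hiX) hfj rfl)
    · exact hφ (hmaps i hiX) hj hfj ▸ hψ i hiX

end Successor

theorem isLadder_iff {ι : Type*} {Δ : ι → Segment} {S : Finset ι} :
    IsLadder Δ S ↔ Set.InjOn (fun i => (Δ i).b) S ∧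
      ∀ i ∈ S, ∀ j ∈ S, (Δ i).b < (Δ j).b → (Δ i).a < (Δ j).a := by
  constructor
  · rintro ⟨e, he⟩
    have hb : StrictAnti fun k => (Δ (e k).val).b := fun k l hkl => (he k l hkl).2
    have ha : StrictAnti fun k => (Δ (e k).val).a := fun k l hkl => (he k l hkl).1
    have he' : ∀ i ∈ S, ∃ k, (e k).val = i := fun i hi =>
      ⟨e.symm ⟨i, hi⟩, by rw [e.apply_symm_apply]⟩
    refine ⟨fun i hi j hj hij => ?_, fun i hi j hj hij => ?_⟩ <;>
      obtain ⟨k, rfl⟩ := he' i hi <;> obtain ⟨l, rfl⟩ := he' j hj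
    · rw [hb.injective hij]
    · exact ha.lt_iff_gt.2 (hb.lt_iff_gt.1 hij)
  · rintro ⟨hb, hab⟩
    let _ : LinearOrder S := LinearOrder.lift' (fun x => OrderDual.toDual (Δ x).b)
      fun x y h => Subtype.ext (hb x.2 y.2 h)
    let e := Fintype.orderIsoFinOfCardEq S (Fintype.card_coe S)
    refine ⟨e.toEquiv, fun k l hkl => ?_⟩
    have hlt : (Δ (e l).val).b < (Δ (e k).val).b := e.strictMono hkl
    exact ⟨hab _ (e l).2 _ (e k).2 hlt, hlt⟩

section Conditions

variable {ι : Type*} {Δ₀ : Segment} {Δ : ι → Segment}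

theorem lc_of_forall_not_prec (h : ∀ i, ¬ Δ₀.prec (Δ i)) : LC Δ₀ Δ :=
  ⟨id, fun i hi => absurd hi (h i), fun i hi => absurd hi (h i)⟩

/-- The injection witnessing `LC` moves any segment preceded by `Δ₀` to one that is again preceded
by `Δ₀` but ends strictly earlier, which is impossible forever. -/
theorem not_prec_of_lc (ha : ∀ i, (Δ i).a ≠ Δ₀.a) (hb : ∀ i, (Δ i).b ≠ Δ₀.b) (h : LC Δ₀ Δ)
    (i : ι) : ¬ Δ₀.prec (Δ i) := by
  obtain ⟨f, -, hf⟩ := h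
  induction hn : ((Δ i).b - Δ₀.b).toNat using Nat.strong_induction_on generalizing i with
  | _ n ih =>
    intro hi
    obtain ⟨hshift, hprec⟩ := hf i hi
    have hnext := Segment.prec_of_shift_prec hshift (ha _).symm (hb _).symm
    exact ih _ (by unfold Segment.prec at hi hprec hnext; omega) (f i) rfl hnext

variable [Fintype ι] [DecidableEq ι]

theorem isLadder_of_rc (hreg : Regular Δ) {i₀ : ι} (h : RC (Δ i₀) Δ) :
    IsLadder Δ (insert i₀ (Finset.univ.filter fun i => (Δ i).prec (Δ i₀))) := by
  obtain ⟨f, hinj, hf⟩ := h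
  set X := Finset.univ.filter fun i => (Δ i).prec (Δ i₀)
  have hX : ∀ i, i ∈ X ↔ (Δ i).prec (Δ i₀) := by simp [X]
  have hmaps : ∀ i ∈ X, f i ∈ insert i₀ X := by
    intro i hi
    rw [Finset.mem_insert, hX]
    by_cases hfi : f i = i₀
    · exact Or.inl hfi
    · exact Or.inr (Segment.prec_of_shift_prec (hf i ((hX i).1 hi)).1
        (fun h => hfi (hreg.1 _ _ h)) (fun h => hfi (hreg.2 _ _ h)))
  refine isLadder_iff.2 ⟨fun i _ j _ h => hreg.2 i j h, fun i hi j hj hij => ?_⟩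
  refine lt_of_injOn_of_lt_apply (φ := fun i => (Δ i).b) hmaps
    (fun x hx y hy => hinj ((hX x).1 hx) ((hX y).1 hy)) (fun i hi => (hf i ((hX i).1 hi)).2.2.2)
    (fun i hi => (hf i ((hX i).1 hi)).2.1) (fun i _ j _ h => hreg.2 i j h) hi hj hij

theorem rc_of_isLadder {i₀ : ι}
    (h : IsLadder Δ (insert i₀ (Finset.univ.filter fun i => (Δ i).prec (Δ i₀)))) :
    RC (Δ i₀) Δ := by
  obtain ⟨hb, hab⟩ := isLadder_iff.1 h
  set S := insert i₀ (Finset.univ.filter fun i => (Δ i).prec (Δ i₀))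
  have hS : ∀ i, i ∈ S ↔ i = i₀ ∨ (Δ i).prec (Δ i₀) := by simp [S]
  -- `g i` is the segment following `Δ i` in the ladder `S`
  have hnext : ∀ i, (Δ i).prec (Δ i₀) → ∃ j ∈ S, (Δ i).b < (Δ j).b ∧
      ∀ s ∈ S, (Δ i).b < (Δ s).b → (Δ j).b ≤ (Δ s).b := by
    intro i hi
    obtain ⟨j, hj, hmin⟩ := (S.filter fun s => (Δ i).b < (Δ s).b).exists_min_image
      (fun s => (Δ s).b) ⟨i₀, Finset.mem_filter.2 ⟨(hS _).2 (Or.inl rfl), hi.2.2⟩⟩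
    rw [Finset.mem_filter] at hj
    exact ⟨j, hj.1, hj.2, fun s hs hlt => hmin s (Finset.mem_filter.2 ⟨hs, hlt⟩)⟩
  choose! g hgS hglt hgmin using hnext
  refine ⟨g, fun x hx y hy hxy => ?_, fun i hi => ?_⟩
  · have hxS := (hS x).2 (Or.inr hx)
    have hyS := (hS y).2 (Or.inr hy)
    rcases lt_trichotomy (Δ x).b (Δ y).b with hlt | heq | hlt
    · exact absurd ((hgmin x hx y hyS hlt).trans_lt (hxy ▸ hglt y hy)) (lt_irrefl _)
    · exact hb hxS hyS heq
    · exact absurd ((hgmin y hy x hxS hlt).trans_lt (hxy ▸ hglt x hx)) (lt_irrefl _)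
  · have hagi := hab i ((hS i).2 (Or.inr hi)) (g i) (hgS i hi) (hglt i hi)
    have hbgi := hglt i hi
    have hgi : (Δ (g i)).a ≤ (Δ i₀).a ∧ (Δ (g i)).b ≤ (Δ i₀).b := by
      rcases (hS _).1 (hgS i hi) with hgi | hgi
      · exact hgi ▸ ⟨le_rfl, le_rfl⟩
      · exact ⟨hgi.1.le, hgi.2.2.le⟩
    simp only [Segment.prec, Segment.shift] at hi ⊢
    omega

end Conditions

/-- For a regular multisegment `m` and a segment `Δ_{i₀}` occurring in `m`:
`LC(Δ_{i₀}, m)`, `RC(Δ_{i₀}, m)` and `LC(Δ_{i₀}, m∖Δ_{i₀})` all hold iff `Δ_{i₀}` precedes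
no other segment of `m` and `Δ_{i₀}` together with all the segments of `m` preceding it
forms a ladder. -/
theorem statement4 {N : ℕ} (Δ : Fin N → Segment) (hreg : Regular Δ) (i₀ : Fin N) :
    (LC (Δ i₀) Δ ∧ RC (Δ i₀) Δ ∧
        LC (Δ i₀) (fun i : {i : Fin N // i ≠ i₀} => Δ i.val)) ↔
    ((∀ i : Fin N, i ≠ i₀ → ¬ (Δ i₀).prec (Δ i)) ∧
      IsLadder Δ (insert i₀ (Finset.univ.filter fun i => (Δ i).prec (Δ i₀)))) := by
  constructor
  · rintro ⟨-, hRC, hLC⟩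
    exact ⟨fun i hi => not_prec_of_lc (fun j h => j.2 (hreg.1 _ _ h))
      (fun j h => j.2 (hreg.2 _ _ h)) hLC ⟨i, hi⟩, isLadder_of_rc hreg hRC⟩
  · rintro ⟨hX, hladder⟩
    have hX' : ∀ i, ¬ (Δ i₀).prec (Δ i) := fun i =>
      if hi : i = i₀ then hi ▸ Segment.prec_irrefl _ else hX i hi
    exact ⟨lc_of_forall_not_prec hX', rc_of_isLadder hladder,
      lc_of_forall_not_prec fun i => hX' i.val⟩
end

section
/- Let m be a regular multisegment, m' a sub-multisegment of m, and Δ a segment occurring in m'. If Δ is a good left segment of m, then Δ is a good left segment of m'; if Δ is a good right segment of m, then Δ is a good right segment of m'. -/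
/-- `Δ_{i₀}` is a good left segment of the multisegment `m` given by the family `Δ` :
`LC(Δ_{i₀}, m)`, `RC(Δ_{i₀}, m)` and `LC(Δ_{i₀}, m∖Δ_{i₀})` all hold. -/
def GoodLeft {ι : Type*} (Δ : ι → Segment) (i₀ : ι) : Prop :=
  LC (Δ i₀) Δ ∧ RC (Δ i₀) Δ ∧ LC (Δ i₀) (fun i : {i : ι // i ≠ i₀} => Δ i.val)

/-- `Δ_{i₀}` is a good right segment of the multisegment `m` given by the family `Δ` :
`LC(Δ_{i₀}, m)`, `RC(Δ_{i₀}, m)` and `RC(Δ_{i₀}, m∖Δ_{i₀})` all hold. -/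
def GoodRight {ι : Type*} (Δ : ι → Segment) (i₀ : ι) : Prop :=
  LC (Δ i₀) Δ ∧ RC (Δ i₀) Δ ∧ RC (Δ i₀) (fun i : {i : ι // i ≠ i₀} => Δ i.val)

/-- A good segment is one which is good left or good right. -/
def Good {ι : Type*} (Δ : ι → Segment) (i₀ : ι) : Prop :=
  GoodLeft Δ i₀ ∨ GoodRight Δ i₀

/-!
Since `m` is regular, a segment `Δ'` of `m` other than `Δ` has beginning and end different from
those of `Δ`, so `←Δ ≺ Δ'` already forces `Δ ≺ Δ'`: every index of `Y_{Δ,m}` outside `m'` lies in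
`X_{Δ,m}`. Hence an injection `f : X_{Δ,m} → Y_{Δ,m}` witnessing `LC(Δ,m)` can be followed from
an index of `m'` until it first returns to `m'`; the resulting map witnesses `LC(Δ,m')`, and
likewise for `RC` and for `m ∖ Δ` inside `m' ∖ Δ`.
-/

open Function Set

/-- Short-circuiting a point `k ∈ X \ S` (sending whatever `f` maps to `k` directly to `f k`)
keeps `f` injective and decreasing for `r`, so iterating removes all of `X \ S`. -/
theorem exists_injOn_inter_of_diff_subset {ι : Type*} {X Y S : Set ι} {r : ι → ι → Prop}
    [IsTrans ι r] (hX : (X \ S).Finite) (hYS : Y \ S ⊆ X) {f : ι → ι} (hf : InjOn f X)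
    (hfY : ∀ i ∈ X, f i ∈ Y ∧ r (f i) i) :
    ∃ g : ι → ι, InjOn g (X ∩ S) ∧ ∀ i ∈ X ∩ S, g i ∈ Y ∩ S ∧ r (g i) i := by
  classical
  induction hn : (X \ S).ncard generalizing X Y f with
  | zero =>
    have hXS : X ⊆ S := sdiff_eq_empty.1 ((ncard_eq_zero hX).1 hn)
    refine ⟨f, hf.mono inter_subset_left, fun i hi => ?_⟩
    obtain ⟨hY, hri⟩ := hfY i hi.1
    exact ⟨⟨hY, by_contra fun hS => hS (hXS (hYS ⟨hY, hS⟩))⟩, hri⟩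
  | succ n ih =>
    obtain ⟨k, hkX, hkS⟩ : (X \ S).Nonempty := nonempty_of_ncard_ne_zero (by omega)
    let f' := fun i => if f i = k then f k else f i
    have hf'Y : ∀ i ∈ X \ {k}, f' i ∈ Y \ {k} ∧ r (f' i) i := by
      rintro i ⟨hiX, hik : i ≠ k⟩
      by_cases hfi : f i = k
      · have hfk : f k ≠ k := fun hfk => hik (hf hiX hkX (hfi.trans hfk.symm))
        have hrk := (hfY i hiX).2
        rw [hfi] at hrk
        simp only [f', if_pos hfi]
        exact ⟨⟨(hfY k hkX).1, hfk⟩, _root_.trans (hfY k hkX).2 hrk⟩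
      · simp only [f', if_neg hfi]
        exact ⟨⟨(hfY i hiX).1, hfi⟩, (hfY i hiX).2⟩
    have hf' : InjOn f' (X \ {k}) := by
      rintro i ⟨hiX, hik : i ≠ k⟩ j ⟨hjX, hjk : j ≠ k⟩ hij
      simp only [f'] at hij
      split_ifs at hij with hi hj hj
      · exact hf hiX hjX (hi.trans hj.symm)
      · exact absurd (hf hkX hjX hij) hjk.symm
      · exact absurd (hf hiX hkX hij) hik
      · exact hf hiX hjX hij
    have hYS' : (Y \ {k}) \ S ⊆ X \ {k} := by
      rw [sdiff_sdiff_comm]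
      exact sdiff_subset_sdiff_left hYS
    have hn' : ((X \ {k}) \ S).ncard = n := by
      rw [sdiff_sdiff_comm, ncard_sdiff_singleton_of_mem (show k ∈ X \ S from ⟨hkX, hkS⟩), hn,
        Nat.add_sub_cancel]
    obtain ⟨g, hg, hgY⟩ := ih (hX.subset (sdiff_subset_sdiff_left sdiff_subset)) hYS' hf' hf'Y hn'
    have hXS : X ∩ S ⊆ (X \ {k}) ∩ S :=
      fun i hi => ⟨⟨hi.1, fun hik => hkS (hik ▸ hi.2)⟩, hi.2⟩
    refine ⟨g, hg.mono hXS, fun i hi => ?_⟩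
    obtain ⟨⟨hY, hS⟩, hri⟩ := hgY i (hXS hi)
    exact ⟨⟨hY.1, hS⟩, hri⟩

theorem exists_injOn_preimage_embedding {ι ι' : Type*} [Finite ι] {X Y : Set ι}
    {r : ι → ι → Prop} [IsTrans ι r] (e : ι' ↪ ι) (hY : Y \ range e ⊆ X) {f : ι → ι}
    (hf : InjOn f X) (hfY : ∀ i ∈ X, f i ∈ Y ∧ r (f i) i) :
    ∃ f' : ι' → ι', InjOn f' (e ⁻¹' X) ∧ ∀ i ∈ e ⁻¹' X, e (f' i) ∈ Y ∧ r (e (f' i)) (e i) := by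
  obtain ⟨g, hg, hgY⟩ := exists_injOn_inter_of_diff_subset (toFinite _) hY hf hfY
  have hlift : ∀ i, ∃ j, e i ∈ X → e j = g (e i) := fun i => by
    by_cases hi : e i ∈ X
    · obtain ⟨⟨-, j, hj⟩, -⟩ := hgY (e i) ⟨hi, i, rfl⟩
      exact ⟨j, fun _ => hj⟩
    · exact ⟨i, fun h => absurd h hi⟩
  choose f' hf' using hlift
  refine ⟨f', fun i hi j hj hij => ?_, fun i hi => ?_⟩
  · refine e.injective (hg ⟨hi, i, rfl⟩ ⟨hj, j, rfl⟩ ?_)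
    rw [← hf' i hi, ← hf' j hj, hij]
  · rw [hf' i hi]
    exact ⟨(hgY (e i) ⟨hi, i, rfl⟩).1.1, (hgY (e i) ⟨hi, i, rfl⟩).2⟩

theorem Segment.prec_of_shift_prec_s6 {Δ Δ' : Segment} (h : Δ.shift.prec Δ') (ha : Δ.a ≠ Δ'.a)
    (hb : Δ.b ≠ Δ'.b) : Δ.prec Δ' := by
  simp only [Segment.prec, Segment.shift] at h ⊢
  omega

theorem Regular.prec_of_shift_prec_s6 {ι : Type*} {Δ : ι → Segment} (hreg : Regular Δ) {i j : ι}
    (hij : i ≠ j) (h : (Δ i).shift.prec (Δ j)) : (Δ i).prec (Δ j) :=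
  Segment.prec_of_shift_prec_s6 h (fun ha => hij (hreg.1 i j ha)) (fun hb => hij (hreg.2 i j hb))

section Embedding

variable {ι ι' : Type*} [Finite ι] (e : ι' ↪ ι) {Δ : ι → Segment} {Δ₀ : Segment}

theorem LC.comp_embedding (h : LC Δ₀ Δ)
    (hout : ∀ j ∉ range e, Δ₀.shift.prec (Δ j) → Δ₀.prec (Δ j)) :
    LC Δ₀ (fun i => Δ (e i)) := by
  obtain ⟨f, hf, hfY⟩ := h
  -- unlike `≺`, this relation is transitive; the rest of `≺` comes back from `Y_{Δ₀,m}`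
  let r : ι → ι → Prop := fun j i => (Δ j).a < (Δ i).a ∧ (Δ j).b < (Δ i).b
  have : IsTrans ι r := ⟨fun _ _ _ h₁ h₂ => ⟨h₁.1.trans h₂.1, h₁.2.trans h₂.2⟩⟩
  obtain ⟨f', hf', hf'Y⟩ := exists_injOn_preimage_embedding
    (Y := {j | Δ₀.shift.prec (Δ j)}) (r := r) e (fun j hj => hout j hj.2 hj.1) hf
    (fun i hi => ⟨(hfY i hi).1, (hfY i hi).2.1, (hfY i hi).2.2.2⟩)
  refine ⟨f', hf', fun i hi => ⟨(hf'Y i hi).1, ?_⟩⟩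
  obtain ⟨hY : Δ₀.shift.prec (Δ (e (f' i))), hr⟩ := hf'Y i hi
  simp only [Segment.prec, Segment.shift, r] at hi hY hr ⊢
  omega

theorem RC.comp_embedding (h : RC Δ₀ Δ)
    (hout : ∀ j ∉ range e, (Δ j).shift.prec Δ₀ → (Δ j).prec Δ₀) :
    RC Δ₀ (fun i => Δ (e i)) := by
  obtain ⟨f, hf, hfY⟩ := h
  let r : ι → ι → Prop := fun j i => (Δ i).a < (Δ j).a ∧ (Δ i).b < (Δ j).b
  have : IsTrans ι r := ⟨fun _ _ _ h₁ h₂ => ⟨h₂.1.trans h₁.1, h₂.2.trans h₁.2⟩⟩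
  obtain ⟨f', hf', hf'Y⟩ := exists_injOn_preimage_embedding
    (Y := {j | (Δ j).shift.prec Δ₀}) (r := r) e (fun j hj => hout j hj.2 hj.1) hf
    (fun i hi => ⟨(hfY i hi).1, (hfY i hi).2.1, (hfY i hi).2.2.2⟩)
  refine ⟨f', hf', fun i hi => ⟨(hf'Y i hi).1, ?_⟩⟩
  obtain ⟨hY : (Δ (e (f' i))).shift.prec Δ₀, hr⟩ := hf'Y i hi
  simp only [Segment.prec, Segment.shift, r] at hi hY hr ⊢
  omega

end Embedding

/-- Lemma 3.5 (lem_good_sub): if `m'` is a sub-multisegment of a regular multisegment `m`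
(given by an embedding `e` of index sets) and `Δ_{e i₀}` is a good left (resp. right)
segment of `m`, then it is a good left (resp. right) segment of `m'`. -/
theorem statement6 {N N' : ℕ} (Δ : Fin N → Segment) (hreg : Regular Δ)
    (e : Fin N' ↪ Fin N) (i₀ : Fin N') :
    (GoodLeft Δ (e i₀) → GoodLeft (fun i => Δ (e i)) i₀) ∧
    (GoodRight Δ (e i₀) → GoodRight (fun i => Δ (e i)) i₀) := by
  have hne : ∀ j ∉ range e, j ≠ e i₀ := fun j hj h => hj ⟨i₀, h.symm⟩
  have hLC := fun h : LC (Δ (e i₀)) Δ => h.comp_embedding e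
    fun j hj => hreg.prec_of_shift_prec_s6 (hne j hj).symm
  have hRC := fun h : RC (Δ (e i₀)) Δ => h.comp_embedding e
    fun j hj => hreg.prec_of_shift_prec_s6 (hne j hj)
  let e' : {i // i ≠ i₀} ↪ {j // j ≠ e i₀} := e.subtypeMap fun _ h => e.injective.ne h
  refine ⟨fun ⟨hl, hr, hl'⟩ => ⟨hLC hl, hRC hr, hl'.comp_embedding e' fun j _ => ?_⟩,
    fun ⟨hl, hr, hr'⟩ => ⟨hLC hl, hRC hr, hr'.comp_embedding e' fun j _ => ?_⟩⟩
  · exact hreg.prec_of_shift_prec_s6 j.2.symm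
  · exact hreg.prec_of_shift_prec_s6 j.2
end

section
/- For N ≥ 2, let m = Δ_1 + ⋯ + Δ_N be a regular multisegment with Δ_i = [a_i; b_i] and b_1 > b_2 > ⋯ > b_N, and suppose the associated permutation σ = σ_m avoids the patterns 4231 and 3412. Then: (1) Δ_1 or Δ_{σ(1)} is a good segment of m; (2) Δ_N or Δ_{σ(N)} is a good segment of m; (3) if σ(N) = 1 then Δ_N is a good right segment of m; (4) if σ(1) = N then Δ_1 is a good left segment of m; (5) if both σ(N) = 1 and σ(1) = N then m is a ladder. -/
/-- `σ ∈ S_N` contains the pattern `τ ∈ S_k` : there are indices `i_1 < ⋯ < i_k` with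
`σ(i_s) < σ(i_t) ↔ τ(s) < τ(t)` for all `s, t`. -/
def ContainsPattern {N k : ℕ} (σ : Equiv.Perm (Fin N)) (τ : Equiv.Perm (Fin k)) : Prop :=
  ∃ g : Fin k ↪o Fin N, ∀ s t : Fin k, σ (g s) < σ (g t) ↔ τ s < τ t

/-- `σ` avoids the pattern `τ`. -/
def Avoids {N k : ℕ} (σ : Equiv.Perm (Fin N)) (τ : Equiv.Perm (Fin k)) : Prop :=
  ¬ ContainsPattern σ τ

/-- The pattern `4231` (in one-line notation), as a permutation of `Fin 4`. -/
def perm4231 : Equiv.Perm (Fin 4) := Equiv.swap 0 3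

/-- The pattern `3412` (in one-line notation), as a permutation of `Fin 4`. -/
def perm3412 : Equiv.Perm (Fin 4) := Equiv.swap 0 2 * Equiv.swap 1 3

/-!
Nothing precedes `Δ_N` (smallest end) or `Δ_{σ(1)}` (smallest beginning), and `Δ_1` (largest
end) and `Δ_{σ(N)}` (largest beginning) precede nothing. For such an extreme segment `Δ`, one of
`LC` and `RC` holds vacuously, and the other holds as soon as the segments of `X_{Δ,m}` (resp.
`X̃_{Δ,m}`) have their beginnings and ends in the same order: the injection sends each of them to
its neighbour in this chain on the side of `Δ`, and the one adjacent to `Δ` to `Δ` itself. If the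
order fails for both candidates of a part, the two offending pairs together with the extreme
segments yield four indices forming a pattern `4231` or `3412` of `σ`.
-/

open Function

theorem Segment.shift_prec_self (Δ : Segment) : Δ.shift.prec Δ := by
  simp only [Segment.prec, Segment.shift]
  have := Δ.le
  omega

theorem exists_injOn_predecessor {ι α : Type*} [Finite ι] [LinearOrder α] (X : Set ι)
    (k : ι → α) (hk : Set.InjOn k X) (c : ι) (hc : c ∉ X) :
    ∃ f : ι → ι, Set.InjOn f X ∧ ∀ i ∈ X,
      (f i = c ∧ ∀ j ∈ X, k i ≤ k j) ∨ (f i ∈ X ∧ k (f i) < k i) := by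
  classical
  have hpred : ∀ i, ∃ u, (u = c ∧ ∀ j ∈ X, k i ≤ k j) ∨
      (u ∈ X ∧ k u < k i ∧ ∀ j ∈ X, k j < k i → k j ≤ k u) := by
    intro i
    by_cases hmin : ∃ j ∈ X, k j < k i
    · obtain ⟨u, ⟨huX, hui⟩, hmax⟩ := Set.exists_max_image {j | j ∈ X ∧ k j < k i} k
        (Set.toFinite _) hmin
      exact ⟨u, .inr ⟨huX, hui, fun j hj hji => hmax j ⟨hj, hji⟩⟩⟩
    · exact ⟨c, .inl ⟨rfl, fun j hj => not_lt.1 fun hji => hmin ⟨j, hj, hji⟩⟩⟩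
  choose f hf using hpred
  have hne : ∀ x ∈ X, ∀ y ∈ X, k x < k y → f x ≠ f y := by
    intro x hx y hy hxy hfxy
    rcases hf y with ⟨-, hy_min⟩ | ⟨hfyX, -, hfy_max⟩
    · exact (hy_min x hx).not_gt hxy
    rcases hf x with ⟨hfx, -⟩ | ⟨-, hfx_lt, -⟩
    · exact hc (hfx ▸ hfxy ▸ hfyX)
    · exact (hfy_max x hx hxy).not_gt (hfxy ▸ hfx_lt)
  refine ⟨f, fun x hx y hy hfxy => ?_, fun i _ => (hf i).imp_right fun h => ⟨h.1, h.2.1⟩⟩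
  rcases lt_trichotomy (k x) (k y) with hxy | hxy | hxy
  · exact absurd hfxy (hne x hx y hy hxy)
  · exact hk hx hy hxy
  · exact absurd hfxy.symm (hne y hy x hx hxy)

/-- The beginnings and the ends of the segments of `X_{Δ₀,m}` are in the same order. -/
def XOrdered {ι : Type*} (Δ₀ : Segment) (Δ : ι → Segment) : Prop :=
  ∀ u v, Δ₀.prec (Δ u) → Δ₀.prec (Δ v) → (Δ u).a < (Δ v).a → (Δ u).b < (Δ v).b

/-- The beginnings and the ends of the segments of `X̃_{Δ₀,m}` are in the same order. -/
def XTildeOrdered {ι : Type*} (Δ₀ : Segment) (Δ : ι → Segment) : Prop :=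
  ∀ u v, (Δ u).prec Δ₀ → (Δ v).prec Δ₀ → (Δ u).b < (Δ v).b → (Δ u).a < (Δ v).a

section Criteria

variable {ι : Type*} {Δ : ι → Segment}

theorem LC_of_xOrdered [Finite ι] (ha : Injective fun i => (Δ i).a) (c : ι)
    (h : XOrdered (Δ c) Δ) : LC (Δ c) Δ := by
  obtain ⟨f, hinj, hf⟩ := exists_injOn_predecessor {i | (Δ c).prec (Δ i)} (fun i => (Δ i).a)
    ha.injOn c fun hc => hc.1.false
  refine ⟨f, hinj, fun i hi => ?_⟩
  rcases hf i hi with ⟨hfc, -⟩ | ⟨hu, hlt⟩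
  · rw [hfc]
    exact ⟨(Δ c).shift_prec_self, hi⟩
  · have hb := h _ _ hu hi hlt
    simp only [Set.mem_ofPred_eq, Segment.prec, Segment.shift] at hi hu hlt hb ⊢
    omega

theorem RC_of_xTildeOrdered [Finite ι] (hb : Injective fun i => (Δ i).b) (c : ι)
    (h : XTildeOrdered (Δ c) Δ) : RC (Δ c) Δ := by
  obtain ⟨f, hinj, hf⟩ := exists_injOn_predecessor {i | (Δ i).prec (Δ c)} (fun i => -(Δ i).b)
    (fun x _ y _ hxy => hb (neg_inj.1 hxy)) c fun hc => hc.1.false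
  refine ⟨f, hinj, fun i hi => ?_⟩
  rcases hf i hi with ⟨hfc, -⟩ | ⟨hu, hlt⟩
  · rw [hfc]
    exact ⟨(Δ c).shift_prec_self, hi⟩
  · have ha := h _ _ hi hu (neg_lt_neg_iff.1 hlt)
    simp only [Set.mem_ofPred_eq, Segment.prec, Segment.shift] at hi hu hlt ha ⊢
    omega

theorem LC_of_forall_not_prec {Δ₀ : Segment} (h : ∀ i, ¬ Δ₀.prec (Δ i)) : LC Δ₀ Δ :=
  ⟨id, fun i hi => (h i hi).elim, fun i hi => (h i hi).elim⟩

theorem RC_of_forall_not_prec {Δ₀ : Segment} (h : ∀ i, ¬ (Δ i).prec Δ₀) : RC Δ₀ Δ :=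
  ⟨id, fun i hi => (h i hi).elim, fun i hi => (h i hi).elim⟩

theorem goodLeft_of_xTildeOrdered [Finite ι] (hb : Injective fun i => (Δ i).b) {i₀ : ι}
    (hX : ∀ i, ¬ (Δ i₀).prec (Δ i)) (h : XTildeOrdered (Δ i₀) Δ) : GoodLeft Δ i₀ :=
  ⟨LC_of_forall_not_prec hX, RC_of_xTildeOrdered hb i₀ h,
    LC_of_forall_not_prec fun i => hX i⟩

theorem goodRight_of_xOrdered [Finite ι] (ha : Injective fun i => (Δ i).a) {i₀ : ι}
    (hX : ∀ i, ¬ (Δ i).prec (Δ i₀)) (h : XOrdered (Δ i₀) Δ) : GoodRight Δ i₀ :=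
  ⟨LC_of_xOrdered ha i₀ h, RC_of_forall_not_prec hX, RC_of_forall_not_prec fun i => hX i⟩

theorem isLadder_of_strictAnti [LinearOrder ι] (s : Finset ι)
    (ha : StrictAnti fun i => (Δ i).a) (hb : StrictAnti fun i => (Δ i).b) : IsLadder Δ s :=
  ⟨(s.orderIsoOfFin rfl).toEquiv, fun _ _ hkl =>
    ⟨ha ((s.orderIsoOfFin rfl).strictMono hkl), hb ((s.orderIsoOfFin rfl).strictMono hkl)⟩⟩

end Criteria

theorem containsPattern_of_strictMono {N k : ℕ} {σ : Equiv.Perm (Fin N)}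
    {τ : Equiv.Perm (Fin k)} (g : Fin k ↪o Fin N) (h : StrictMono (σ ∘ g ∘ τ.symm)) :
    ContainsPattern σ τ :=
  ⟨g, fun s t => by simpa using h.lt_iff_lt (a := τ s) (b := τ t)⟩

section Permutation

variable {N : ℕ} {Δ : Fin N → Segment} {σ : Equiv.Perm (Fin N)}

theorem containsPattern_of_segments {k : ℕ} {τ : Equiv.Perm (Fin k)}
    (hσ : StrictMono fun i => (Δ (σ i)).a) (x : Fin k → Fin N)
    (hx : StrictMono fun s => (Δ (x s)).a) (hxτ : StrictMono (x ∘ τ.symm)) :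
    ContainsPattern σ τ := by
  have hpos : StrictMono (σ.symm ∘ x) := fun s t hst =>
    hσ.lt_iff_lt.1 (by simpa using hx hst)
  refine containsPattern_of_strictMono (.ofStrictMono _ hpos) ?_
  convert hxτ using 1
  ext s
  simp

theorem containsPattern4231 (hσ : StrictMono fun i => (Δ (σ i)).a) {x₁ x₂ x₃ x₄ : Fin N}
    (ha₁₂ : (Δ x₁).a < (Δ x₂).a) (ha₂₃ : (Δ x₂).a < (Δ x₃).a) (ha₃₄ : (Δ x₃).a < (Δ x₄).a)
    (h₄₂ : x₄ < x₂) (h₂₃ : x₂ < x₃) (h₃₁ : x₃ < x₁) : ContainsPattern σ perm4231 := by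
  refine containsPattern_of_segments hσ ![x₁, x₂, x₃, x₄] ?_ ?_ <;>
    refine Fin.strictMono_iff_lt_succ.2 fun i => ?_ <;> fin_cases i <;>
    simpa [perm4231, Equiv.swap_apply_of_ne_of_ne]

theorem containsPattern3412 (hσ : StrictMono fun i => (Δ (σ i)).a) {x₁ x₂ x₃ x₄ : Fin N}
    (ha₁₂ : (Δ x₁).a < (Δ x₂).a) (ha₂₃ : (Δ x₂).a < (Δ x₃).a) (ha₃₄ : (Δ x₃).a < (Δ x₄).a)
    (h₃₄ : x₃ < x₄) (h₄₁ : x₄ < x₁) (h₁₂ : x₁ < x₂) : ContainsPattern σ perm3412 := by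
  refine containsPattern_of_segments hσ ![x₁, x₂, x₃, x₄] ?_ ?_ <;>
    refine Fin.strictMono_iff_lt_succ.2 fun i => ?_ <;> fin_cases i <;>
    simpa [perm3412, Equiv.swap_apply_of_ne_of_ne]

end Permutation

section Multisegment

variable {N : ℕ} {Δ : Fin N → Segment} {σ : Equiv.Perm (Fin N)}

theorem injective_a_of_strictMono (hσ : StrictMono fun i => (Δ (σ i)).a) :
    Injective fun i => (Δ i).a := fun i j h =>
  σ.symm.injective (hσ.injective (by simpa using h))

theorem a_sigma_le_of_isBot (hσ : StrictMono fun i => (Δ (σ i)).a) {z : Fin N} (hz : IsBot z)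
    (i : Fin N) : (Δ (σ z)).a ≤ (Δ i).a := by
  simpa using hσ.monotone (hz (σ.symm i))

theorem a_le_sigma_of_isTop (hσ : StrictMono fun i => (Δ (σ i)).a) {l : Fin N} (hl : IsTop l)
    (i : Fin N) : (Δ i).a ≤ (Δ (σ l)).a := by
  simpa using hσ.monotone (hl (σ.symm i))

theorem a_sigma_lt_of_isBot (hσ : StrictMono fun i => (Δ (σ i)).a) {z i : Fin N}
    (hz : IsBot z) (hi : i ≠ σ z) : (Δ (σ z)).a < (Δ i).a :=
  (a_sigma_le_of_isBot hσ hz i).lt_of_ne ((injective_a_of_strictMono hσ).ne hi.symm)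

theorem a_lt_sigma_of_isTop (hσ : StrictMono fun i => (Δ (σ i)).a) {l i : Fin N}
    (hl : IsTop l) (hi : i ≠ σ l) : (Δ i).a < (Δ (σ l)).a :=
  (a_le_sigma_of_isTop hσ hl i).lt_of_ne ((injective_a_of_strictMono hσ).ne hi)

theorem exists_of_not_xOrdered (hb : StrictAnti fun i => (Δ i).b) {Δ₀ : Segment}
    (h : ¬ XOrdered Δ₀ Δ) :
    ∃ u v, Δ₀.prec (Δ u) ∧ Δ₀.prec (Δ v) ∧ (Δ u).a < (Δ v).a ∧ u < v := by
  simp only [XOrdered, not_forall, not_lt] at h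
  obtain ⟨u, v, hu, hv, hauv, hbvu⟩ := h
  exact ⟨u, v, hu, hv, hauv, (hb.le_iff_ge.1 hbvu).lt_of_ne (by rintro rfl; exact hauv.false)⟩

theorem exists_of_not_xTildeOrdered (hb : StrictAnti fun i => (Δ i).b)
    (hσ : StrictMono fun i => (Δ (σ i)).a) {Δ₀ : Segment} (h : ¬ XTildeOrdered Δ₀ Δ) :
    ∃ p q, (Δ p).prec Δ₀ ∧ (Δ q).prec Δ₀ ∧ (Δ q).a < (Δ p).a ∧ q < p := by
  simp only [XTildeOrdered, not_forall, not_lt] at h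
  obtain ⟨p, q, hp, hq, hbpq, haqp⟩ := h
  have hqp := hb.lt_iff_gt.1 hbpq
  exact ⟨p, q, hp, hq, haqp.lt_of_ne ((injective_a_of_strictMono hσ).ne hqp.ne), hqp⟩

theorem goodLeft_of_isBot (hb : StrictAnti fun i => (Δ i).b) {z : Fin N} (hz : IsBot z)
    (h : XTildeOrdered (Δ z) Δ) : GoodLeft Δ z :=
  goodLeft_of_xTildeOrdered hb.injective (fun i hi => hi.2.2.not_ge (hb.antitone (hz i))) h

theorem goodRight_sigma_of_isBot (hσ : StrictMono fun i => (Δ (σ i)).a) {z : Fin N}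
    (hz : IsBot z) (h : XOrdered (Δ (σ z)) Δ) : GoodRight Δ (σ z) :=
  goodRight_of_xOrdered (injective_a_of_strictMono hσ)
    (fun i hi => hi.1.not_ge (a_sigma_le_of_isBot hσ hz i)) h

theorem goodRight_of_isTop (hb : StrictAnti fun i => (Δ i).b)
    (hσ : StrictMono fun i => (Δ (σ i)).a) {l : Fin N} (hl : IsTop l)
    (h : XOrdered (Δ l) Δ) : GoodRight Δ l :=
  goodRight_of_xOrdered (injective_a_of_strictMono hσ)
    (fun i hi => hi.2.2.not_ge (hb.antitone (hl i))) h

theorem goodLeft_sigma_of_isTop (hb : StrictAnti fun i => (Δ i).b)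
    (hσ : StrictMono fun i => (Δ (σ i)).a) {l : Fin N} (hl : IsTop l)
    (h : XTildeOrdered (Δ (σ l)) Δ) : GoodLeft Δ (σ l) :=
  goodLeft_of_xTildeOrdered hb.injective
    (fun i hi => hi.1.not_ge (a_le_sigma_of_isTop hσ hl i)) h

theorem containsPattern4231_of_prec_isBot (hσ : StrictMono fun i => (Δ (σ i)).a)
    {z p q : Fin N} (hz : IsBot z) (hp : (Δ p).prec (Δ z)) (hq : (Δ q).prec (Δ z))
    (haqp : (Δ q).a < (Δ p).a) (hqp : q < p) (hpz : p < σ z) :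
    ContainsPattern σ perm4231 :=
  containsPattern4231 hσ (a_sigma_lt_of_isBot hσ hz (hqp.trans hpz).ne) haqp hp.1
    ((hz q).lt_of_ne (by rintro rfl; exact hq.1.false)) hqp hpz

theorem containsPattern4231_of_isTop_prec (hb : StrictAnti fun i => (Δ i).b)
    (hσ : StrictMono fun i => (Δ (σ i)).a) {l u v : Fin N} (hl : IsTop l)
    (hu : (Δ l).prec (Δ u)) (hv : (Δ l).prec (Δ v)) (hauv : (Δ u).a < (Δ v).a) (huv : u < v)
    (hlu : σ l < u) : ContainsPattern σ perm4231 :=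
  containsPattern4231 hσ hu.1 hauv (a_lt_sigma_of_isTop hσ hl (hlu.trans huv).ne') hlu huv
    (hb.lt_iff_gt.1 hv.2.2)

theorem good_or_good_sigma_of_isBot (hb : StrictAnti fun i => (Δ i).b)
    (hσ : StrictMono fun i => (Δ (σ i)).a) (h4231 : Avoids σ perm4231)
    (h3412 : Avoids σ perm3412) {z : Fin N} (hz : IsBot z) : Good Δ z ∨ Good Δ (σ z) := by
  by_cases hc : XOrdered (Δ (σ z)) Δ
  · exact .inr (.inr (goodRight_sigma_of_isBot hσ hz hc))
  refine .inl (.inl (goodLeft_of_isBot hb hz (by_contra fun h => ?_)))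
  obtain ⟨u, v, hu, hv, hauv, huv⟩ := exists_of_not_xOrdered hb hc
  obtain ⟨p, q, hp, hq, haqp, hqp⟩ := exists_of_not_xTildeOrdered hb hσ h
  have hp_ne : p ≠ σ z := by rintro rfl; exact (a_sigma_le_of_isBot hσ hz q).not_gt haqp
  rcases hp_ne.lt_or_gt with hpc | hcp
  · exact h4231 (containsPattern4231_of_prec_isBot hσ hz hp hq haqp hqp hpc)
  have hzv : z < v := (hz u).trans_lt huv
  have hvc : v < σ z := hb.lt_iff_gt.1 hv.2.2
  rcases ((injective_a_of_strictMono hσ).ne hzv.ne').lt_or_gt with havz | hazv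
  · have hzu : z < u := (hz u).lt_of_ne (by rintro rfl; exact (hauv.trans havz).false)
    exact h4231 (containsPattern4231 hσ hu.1 hauv havz hzu huv hvc)
  · exact h3412 (containsPattern3412 hσ (a_sigma_lt_of_isBot hσ hz hcp.ne') hp.1 hazv hzv hvc
      hcp)

theorem good_or_good_sigma_of_isTop (hb : StrictAnti fun i => (Δ i).b)
    (hσ : StrictMono fun i => (Δ (σ i)).a) (h4231 : Avoids σ perm4231)
    (h3412 : Avoids σ perm3412) {l : Fin N} (hl : IsTop l) : Good Δ l ∨ Good Δ (σ l) := by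
  by_cases hl' : XOrdered (Δ l) Δ
  · exact .inl (.inr (goodRight_of_isTop hb hσ hl hl'))
  refine .inr (.inl (goodLeft_sigma_of_isTop hb hσ hl (by_contra fun h => ?_)))
  obtain ⟨u, v, hu, hv, hauv, huv⟩ := exists_of_not_xOrdered hb hl'
  obtain ⟨p, q, hp, hq, haqp, hqp⟩ := exists_of_not_xTildeOrdered hb hσ h
  have hu_ne : σ l ≠ u := by rintro rfl; exact (a_le_sigma_of_isTop hσ hl v).not_gt hauv
  rcases hu_ne.lt_or_gt with hdu | hud
  · exact h4231 (containsPattern4231_of_isTop_prec hb hσ hl hu hv hauv huv hdu)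
  have hdq : σ l < q := hb.lt_iff_gt.1 hq.2.2
  have hql : q < l := hqp.trans_le (hl p)
  rcases ((injective_a_of_strictMono hσ).ne hql.ne).lt_or_gt with haql | halq
  · exact h3412 (containsPattern3412 hσ haql hu.1 (a_lt_sigma_of_isTop hσ hl hud.ne) hud hdq hql)
  · have hpl : p < l := (hl p).lt_of_ne (by rintro rfl; exact (halq.trans haqp).false)
    exact h4231 (containsPattern4231 hσ halq haqp (a_lt_sigma_of_isTop hσ hl (hdq.trans hqp).ne')
      hdq hqp hpl)

theorem goodRight_of_isTop_of_sigma_eq (hb : StrictAnti fun i => (Δ i).b)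
    (hσ : StrictMono fun i => (Δ (σ i)).a) (h4231 : Avoids σ perm4231) {z l : Fin N}
    (hz : IsBot z) (hl : IsTop l) (hlz : σ l = z) : GoodRight Δ l := by
  refine goodRight_of_isTop hb hσ hl (by_contra fun h => ?_)
  obtain ⟨u, v, hu, hv, hauv, huv⟩ := exists_of_not_xOrdered hb h
  subst hlz
  have hlu : σ l < u := (hz u).lt_of_ne <| by
    rintro rfl; exact (a_le_sigma_of_isTop hσ hl v).not_gt hauv
  exact h4231 (containsPattern4231_of_isTop_prec hb hσ hl hu hv hauv huv hlu)

theorem goodLeft_of_isBot_of_sigma_eq (hb : StrictAnti fun i => (Δ i).b)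
    (hσ : StrictMono fun i => (Δ (σ i)).a) (h4231 : Avoids σ perm4231) {z l : Fin N}
    (hz : IsBot z) (hl : IsTop l) (hzl : σ z = l) : GoodLeft Δ z := by
  refine goodLeft_of_isBot hb hz (by_contra fun h => ?_)
  obtain ⟨p, q, hp, hq, haqp, hqp⟩ := exists_of_not_xTildeOrdered hb hσ h
  subst hzl
  have hpz : p < σ z := (hl p).lt_of_ne <| by
    rintro rfl; exact (a_sigma_le_of_isBot hσ hz q).not_gt haqp
  exact h4231 (containsPattern4231_of_prec_isBot hσ hz hp hq haqp hqp hpz)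

theorem strictAnti_a_of_sigma_eq (hσ : StrictMono fun i => (Δ (σ i)).a)
    (h4231 : Avoids σ perm4231) {z l : Fin N} (hz : IsBot z) (hl : IsTop l)
    (hlz : σ l = z) (hzl : σ z = l) : StrictAnti fun i => (Δ i).a := by
  intro i j hij
  refine lt_of_not_ge fun haij => ?_
  have haij := haij.lt_of_ne ((injective_a_of_strictMono hσ).ne hij.ne)
  have hali : (Δ l).a < (Δ i).a :=
    hzl ▸ a_sigma_lt_of_isBot hσ hz (hzl ▸ (hij.trans_le (hl j)).ne)
  have hajz : (Δ j).a < (Δ z).a :=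
    hlz ▸ a_lt_sigma_of_isTop hσ hl (hlz ▸ ((hz i).trans_lt hij).ne')
  have hzi : z < i := (hz i).lt_of_ne (by rintro rfl; exact (haij.trans hajz).false)
  have hjl : j < l := (hl j).lt_of_ne (by rintro rfl; exact (hali.trans haij).false)
  exact h4231 (containsPattern4231 hσ hali haij hajz hzi hij hjl)

end Multisegment

/-- Proposition 3.6 (prop_existence): for `N ≥ 2`, let `m = Δ_1 + ⋯ + Δ_N` be a regular
multisegment with `b_1 > ⋯ > b_N` whose associated permutation `σ` avoids the patterns
`4231` and `3412`. Then (1) `Δ_1` or `Δ_{σ(1)}` is a good segment of `m`;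
(2) `Δ_N` or `Δ_{σ(N)}` is a good segment of `m`; (3) if `σ(N) = 1` then `Δ_N` is a good
right segment; (4) if `σ(1) = N` then `Δ_1` is a good left segment; (5) if both
`σ(N) = 1` and `σ(1) = N` then `m` is a ladder.
(Indices are 0-based: `Δ_1` is index `0` and `Δ_N` is index `N-1`.) -/
theorem statement7 {N : ℕ} (hN : 2 ≤ N) (Δ : Fin N → Segment)
    (hb : ∀ i j : Fin N, i < j → (Δ j).b < (Δ i).b)
    (σ : Equiv.Perm (Fin N))
    (hσ : ∀ i j : Fin N, i < j → (Δ (σ i)).a < (Δ (σ j)).a)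
    (hav1 : Avoids σ perm4231) (hav2 : Avoids σ perm3412) :
    (Good Δ ⟨0, by omega⟩ ∨ Good Δ (σ ⟨0, by omega⟩)) ∧
    (Good Δ ⟨N - 1, by omega⟩ ∨ Good Δ (σ ⟨N - 1, by omega⟩)) ∧
    (σ ⟨N - 1, by omega⟩ = ⟨0, by omega⟩ → GoodRight Δ ⟨N - 1, by omega⟩) ∧
    (σ ⟨0, by omega⟩ = ⟨N - 1, by omega⟩ → GoodLeft Δ ⟨0, by omega⟩) ∧
    (σ ⟨N - 1, by omega⟩ = ⟨0, by omega⟩ ∧ σ ⟨0, by omega⟩ = ⟨N - 1, by omega⟩ →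
      IsLadder Δ Finset.univ) := by
  have hz : IsBot (⟨0, by omega⟩ : Fin N) := fun i => Nat.zero_le i
  have hl : IsTop (⟨N - 1, by omega⟩ : Fin N) := fun i => Nat.le_sub_one_of_lt i.isLt
  exact ⟨good_or_good_sigma_of_isBot hb hσ hav1 hav2 hz,
    good_or_good_sigma_of_isTop hb hσ hav1 hav2 hl,
    goodRight_of_isTop_of_sigma_eq hb hσ hav1 hz hl,
    goodLeft_of_isBot_of_sigma_eq hb hσ hav1 hz hl,
    fun ⟨hlz, hzl⟩ =>
      isLadder_of_strictAnti _ (strictAnti_a_of_sigma_eq hσ hav1 hz hl hlz hzl) hb⟩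
end

section
/- Let σ ∈ S_N be a permutation avoiding the patterns 4231 and 3412, and let M = (m_{i,j}) be an N×N matrix over a commutative ring. Then det(M|_{Γ[id,σ]}) = Σ_{σ' ≤ σ} sgn(σ') · m_{1,σ'(1)} m_{2,σ'(2)} ⋯ m_{N,σ'(N)}, where the sum runs over all permutations σ' less than or equal to σ in Bruhat order. -/
/-- The Bruhat order on `S_N`, characterized by:
`σ' ≤ σ` iff `#{k ≤ i : σ'(k) ≥ j} ≤ #{k ≤ i : σ(k) ≥ j}` for all `i, j`. -/
def BruhatLE {N : ℕ} (σ' σ : Equiv.Perm (Fin N)) : Prop :=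
  ∀ i j : Fin N,
    (Finset.univ.filter fun k => k ≤ i ∧ j ≤ σ' k).card ≤
      (Finset.univ.filter fun k => k ≤ i ∧ j ≤ σ k).card

instance {N : ℕ} (σ' σ : Equiv.Perm (Fin N)) : Decidable (BruhatLE σ' σ) := by
  unfold BruhatLE; infer_instance

/-- `Γ[id,σ] = {(i, σ'(i)) : σ' ≤ σ}`. -/
def Gamma {N : ℕ} (σ : Equiv.Perm (Fin N)) : Set (Fin N × Fin N) :=
  {p | ∃ σ' : Equiv.Perm (Fin N), BruhatLE σ' σ ∧ σ' p.1 = p.2}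

open Classical in
/-- `M|_{Γ[id,σ]}` : the matrix whose `(i,j)` entry is `M i j` if `(i,j) ∈ Γ[id,σ]`
and `0` otherwise. -/
noncomputable def restrictGamma {N : ℕ} {R : Type*} [CommRing R]
    (M : Matrix (Fin N) (Fin N) R) (σ : Equiv.Perm (Fin N)) :
    Matrix (Fin N) (Fin N) R :=
  Matrix.of fun i j => if (i, j) ∈ Gamma σ then M i j else 0

-- ===== auxiliary development =====
set_option maxHeartbeats 1600000

section
variable {N : ℕ} (σ : Equiv.Perm (Fin N))

def emb4 {a b c d : Fin N} (hab : a < b) (hbc : b < c) (hcd : c < d) : Fin 4 ↪o Fin N :=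
  OrderEmbedding.ofStrictMono (fun s => ![a,b,c,d] s) (by
    intro s t hst
    fin_cases s <;> fin_cases t <;> simp_all <;> omega)

lemma contains4231 {a b c d : Fin N} (hab : a < b) (hbc : b < c) (hcd : c < d)
    (h1 : σ d < σ b) (h2 : σ b < σ c) (h3 : σ c < σ a) : ContainsPattern σ perm4231 := by
  refine ⟨emb4 hab hbc hcd, ?_⟩
  intro s t
  have e0 : (emb4 hab hbc hcd : Fin 4 → Fin N) = ![a,b,c,d] := rfl
  fin_cases s <;> fin_cases t <;>
    simp [e0, perm4231, Equiv.swap_apply_def] <;> omega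

lemma contains3412 {a b c d : Fin N} (hab : a < b) (hbc : b < c) (hcd : c < d)
    (h1 : σ c < σ d) (h2 : σ d < σ a) (h3 : σ a < σ b) : ContainsPattern σ perm3412 := by
  refine ⟨emb4 hab hbc hcd, ?_⟩
  intro s t
  have e0 : (emb4 hab hbc hcd : Fin 4 → Fin N) = ![a,b,c,d] := rfl
  fin_cases s <;> fin_cases t <;>
    simp [e0, perm3412, Equiv.swap_apply_def] <;> omega

end

section
variable {N : ℕ}

open Finset

lemma card_le_pos (τ : Equiv.Perm (Fin N)) (j : Fin N) :
    (univ.filter fun k => τ k ≤ j).card = j.val + 1 := by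
  have : (univ.filter fun k => τ k ≤ j) = (Finset.Iic j).map ⟨τ.symm, τ.symm.injective⟩ := by
    ext k
    simp only [mem_filter, mem_univ, true_and, mem_map, Function.Embedding.coeFn_mk, mem_Iic]
    constructor
    · intro h; exact ⟨τ k, h, τ.symm_apply_apply k⟩
    · rintro ⟨x, hx, rfl⟩; simpa using hx
  rw [this, card_map, Fin.card_Iic]

lemma card_filter_lt (τ : Equiv.Perm (Fin N)) (j : Fin N) :
    (univ.filter fun k => τ k < j).card = j.val := by
  have : (univ.filter fun k => τ k < j) = (Finset.Iio j).map ⟨τ.symm, τ.symm.injective⟩ := by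
    ext k
    simp only [mem_filter, mem_univ, true_and, mem_map, Function.Embedding.coeFn_mk, mem_Iio]
    constructor
    · intro h; exact ⟨τ k, h, τ.symm_apply_apply k⟩
    · rintro ⟨x, hx, rfl⟩; simpa using hx
  rw [this, card_map, Fin.card_Iio]

lemma hull_upper {σ' σ : Equiv.Perm (Fin N)} (h : BruhatLE σ' σ) (i : Fin N) :
    ∃ a, a ≤ i ∧ σ' i ≤ σ a := by
  have hi := h i (σ' i)
  have h1 : 0 < (univ.filter fun k => k ≤ i ∧ σ' i ≤ σ' k).card := by
    refine card_pos.mpr ⟨i, ?_⟩; simp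
  obtain ⟨a, ha⟩ := card_pos.mp (lt_of_lt_of_le h1 hi)
  simp only [mem_filter, mem_univ, true_and] at ha
  exact ⟨a, ha.1, ha.2⟩

lemma hull_lower {σ' σ : Equiv.Perm (Fin N)} (h : BruhatLE σ' σ) (i : Fin N) :
    ∃ b, i ≤ b ∧ σ b ≤ σ' i := by
  by_contra hcon
  push_neg at hcon
  set j := σ' i with hj
  -- all b ≥ i have σ b > j; in particular {σ k ≤ j} ⊆ {k < i}, so j.val + 1 ≤ i.val
  have hsub : (univ.filter fun k => σ k ≤ j) ⊆ (univ.filter fun k => k < i) := by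
    intro k hk
    simp only [mem_filter, mem_univ, true_and] at hk ⊢
    by_contra hlt
    push_neg at hlt
    exact absurd hk (not_le.mpr (hcon k hlt))
  have hIio : (univ.filter fun k => k < i).card = i.val := by
    have : (univ.filter fun k => k < i) = Finset.Iio i := by ext k; simp
    rw [this, Fin.card_Iio]
  have hcard1 : j.val + 1 ≤ i.val := by
    have := card_le_card hsub
    rwa [card_le_pos, hIio] at this
  -- so i ≥ 1 and j+1 < N (since j < i ≤ N-1)
  have hiN := i.isLt
  have hjsucc : j.val + 1 < N := by omega
  set j' : Fin N := ⟨j.val + 1, hjsucc⟩ with hj'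
  have hipos : 0 < i.val := by omega
  set i' : Fin N := ⟨i.val - 1, by omega⟩ with hi'
  -- Bruhat at (i', j')
  have hB := h i' j'
  -- identities: for τ, filter (k ≤ i' ∧ j' ≤ τ k) = filter (k < i ∧ j < τ k)
  have heq : ∀ τ : Equiv.Perm (Fin N), (univ.filter fun k => k ≤ i' ∧ j' ≤ τ k)
      = (univ.filter fun k => k < i ∧ j < τ k) := by
    intro τ
    apply filter_congr
    intro k _
    have h1 : k ≤ i' ↔ k < i := by
      constructor
      · intro hk; exact Fin.lt_def.mpr (by have := Fin.le_def.mp hk; simp [hi'] at this; omega)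
      · intro hk; exact Fin.le_def.mpr (by have := Fin.lt_def.mp hk; simp [hi']; omega)
    have h2 : j' ≤ τ k ↔ j < τ k := by
      constructor
      · intro hk; exact Fin.lt_def.mpr (by have := Fin.le_def.mp hk; simp [hj'] at this; omega)
      · intro hk; exact Fin.le_def.mpr (by have := Fin.lt_def.mp hk; simp [hj']; omega)
    rw [h1, h2]
  rw [heq, heq] at hB
  -- count for σ' : {k < i ∧ j < σ' k}: complement within {k < i} : {k < i ∧ σ' k ≤ j}
  -- {σ' k ≤ j} has j+1 elements; all with k ...? i itself has σ' i = j ≤ j, k=i not < i.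
  -- {k < i ∧ σ' k ≤ j}.card ≤ j.val  (since i ∉)
  have hA : (univ.filter fun k => k < i ∧ σ' k ≤ j).card ≤ j.val := by
    have hss : (univ.filter fun k => k < i ∧ σ' k ≤ j) ⊆ (univ.filter fun k => σ' k ≤ j).erase i := by
      intro k hk
      simp only [mem_filter, mem_univ, true_and] at hk
      refine mem_erase.mpr ⟨ne_of_lt hk.1, ?_⟩
      simp only [mem_filter, mem_univ, true_and]; exact hk.2
    have := card_le_card hss
    rw [card_erase_of_mem (by simp [hj]), card_le_pos] at this
    omega
  have hsplitgen : ∀ τ : Equiv.Perm (Fin N), (univ.filter fun k => k < i ∧ j < τ k).card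
      + (univ.filter fun k => k < i ∧ τ k ≤ j).card = i.val := by
    intro τ
    have hh := card_filter_add_card_filter_not
      (s := univ.filter (fun k : Fin N => k < i)) (p := fun k => j < τ k)
    rw [filter_filter, filter_filter] at hh
    rw [← hIio, ← hh]
    congr 1
    apply congrArg
    apply filter_congr; intro k _
    simp only [not_lt]
  have hsplit' := hsplitgen σ'
  -- count for σ: {k < i ∧ σ k ≤ j} = {σ k ≤ j} entirely (hsub), card = j+1
  have hB2 : (univ.filter fun k => k < i ∧ σ k ≤ j) = (univ.filter fun k => σ k ≤ j) := by
    apply Finset.Subset.antisymm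
    · intro k hk; simp only [mem_filter, mem_univ, true_and] at hk ⊢; exact hk.2
    · intro k hk; simp only [mem_filter, mem_univ, true_and] at hk ⊢
      exact ⟨by simpa using hsub (by simp [hk]), hk⟩
  have hsplit2 := hsplitgen σ
  have hc2 : (univ.filter fun k => k < i ∧ σ k ≤ j).card = j.val + 1 := by
    rw [hB2, card_le_pos]
  omega

end

section
variable {N : ℕ}
open Finset

lemma bruhat_refl (σ : Equiv.Perm (Fin N)) : BruhatLE σ σ := fun _ _ => le_refl _

lemma bruhat_trans {a b c : Equiv.Perm (Fin N)} (h1 : BruhatLE a b) (h2 : BruhatLE b c) :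
    BruhatLE a c := fun i j => (h1 i j).trans (h2 i j)

lemma bruhat_swap (π : Equiv.Perm (Fin N)) {i j : Fin N} (hij : i < j) (hv : π i < π j) :
    BruhatLE π (π * Equiv.swap i j) := by
  intro a b
  set π' := π * Equiv.swap i j with hπ'
  have happ : ∀ k, π' k = π (Equiv.swap i j k) := fun k => rfl
  have hπo : ∀ k, k ≠ i → k ≠ j → π' k = π k := by
    intro k h1 h2; rw [happ, Equiv.swap_apply_of_ne_of_ne h1 h2]
  rcases lt_or_ge a i with ha | ha
  · -- a < i: filters equal
    apply le_of_eq
    apply congrArg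
    apply Finset.filter_congr
    intro k _
    have hki : k ≤ a → k ≠ i := fun h1 => by rintro rfl; exact absurd h1 (not_le.mpr ha)
    have hkj : k ≤ a → k ≠ j := fun h1 => by
      rintro rfl; exact absurd h1 (not_le.mpr (ha.trans hij))
    constructor
    · rintro ⟨h1, h2⟩; exact ⟨h1, by rwa [hπo k (hki h1) (hkj h1)]⟩
    · rintro ⟨h1, h2⟩; exact ⟨h1, by rwa [hπo k (hki h1) (hkj h1)] at h2⟩
  rcases le_or_gt j a with haj | haj
  · -- i, j ≤ a : equal cards via image under swap
    have hia : i ≤ a := (le_of_lt hij).trans haj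
    have hsw : ∀ x, Equiv.swap i j x ≤ a ↔ x ≤ a := by
      intro x
      rcases eq_or_ne x i with rfl | h1
      · rw [Equiv.swap_apply_left]; exact ⟨fun _ => hia, fun _ => haj⟩
      rcases eq_or_ne x j with rfl | h2
      · rw [Equiv.swap_apply_right]; exact ⟨fun _ => haj, fun _ => hia⟩
      · rw [Equiv.swap_apply_of_ne_of_ne h1 h2]
    have himg : (Finset.univ.filter fun k => k ≤ a ∧ b ≤ π' k)
        = (Finset.univ.filter fun k => k ≤ a ∧ b ≤ π k).image (Equiv.swap i j) := by
      ext x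
      simp only [Finset.mem_filter, Finset.mem_univ, true_and, Finset.mem_image]
      constructor
      · rintro ⟨h1, h2⟩
        exact ⟨Equiv.swap i j x, ⟨(hsw x).mpr h1, by rwa [happ] at h2⟩, Equiv.swap_apply_self i j x⟩
      · rintro ⟨y, ⟨hy1, hy2⟩, rfl⟩
        refine ⟨by rwa [hsw], ?_⟩
        rw [happ, Equiv.swap_apply_self]
        exact hy2
    rw [himg, Finset.card_image_of_injective _ (Equiv.swap i j).injective]
  · -- i ≤ a < j : subset
    apply Finset.card_le_card
    intro k hk
    simp only [Finset.mem_filter, Finset.mem_univ, true_and] at hk ⊢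
    have hkj : k ≠ j := by rintro rfl; exact absurd hk.1 (not_le.mpr haj)
    rcases eq_or_ne k i with rfl | hki
    · refine ⟨hk.1, ?_⟩
      rw [happ, Equiv.swap_apply_left]
      exact hk.2.trans (le_of_lt hv)
    · exact ⟨hk.1, by rw [hπo k hki hkj]; exact hk.2⟩

-- measure
def Phi (π : Equiv.Perm (Fin N)) : ℕ := ∑ x : Fin N, x.val * (π x).val

lemma phi_swap (π : Equiv.Perm (Fin N)) {i j : Fin N} (hij : i < j) (hv : π i < π j) :
    Phi (π * Equiv.swap i j) < Phi π := by
  classical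
  set π' := π * Equiv.swap i j with hπ'
  have hπi : π' i = π j := by rw [hπ']; simp [Equiv.Perm.mul_apply]
  have hπj : π' j = π i := by rw [hπ']; simp [Equiv.Perm.mul_apply]
  have hπo : ∀ k, k ≠ i → k ≠ j → π' k = π k := by
    intro k h1 h2
    rw [hπ']
    simp [Equiv.Perm.mul_apply, Equiv.swap_apply_of_ne_of_ne h1 h2]
  have hne : i ≠ j := ne_of_lt hij
  unfold Phi
  rw [← Finset.sum_erase_add _ _ (Finset.mem_univ j), ← Finset.sum_erase_add _ _ (Finset.mem_univ j)]
  have hi_mem : i ∈ Finset.univ.erase j := by simp [hne]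
  rw [← Finset.sum_erase_add _ _ hi_mem, ← Finset.sum_erase_add _ _ hi_mem]
  have hrest : ∑ x ∈ (Finset.univ.erase j).erase i, x.val * ((π' x).val)
      = ∑ x ∈ (Finset.univ.erase j).erase i, x.val * ((π x).val) := by
    apply Finset.sum_congr rfl
    intro x hx
    simp only [Finset.mem_erase] at hx
    rw [hπo x hx.1 hx.2.1]
  rw [hrest, hπi, hπj]
  have h1 : i.val < j.val := hij
  have h2 : (π i).val < (π j).val := hv
  nlinarith [h1, h2]

end

section
variable {N : ℕ}
open Finset

def Hull (σ π : Equiv.Perm (Fin N)) : Prop :=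
  ∀ i, (∃ a, a ≤ i ∧ π i ≤ σ a) ∧ (∃ b, i ≤ b ∧ σ b ≤ π i)

lemma claimA (σ π : Equiv.Perm (Fin N)) (hh : Hull σ π) (hne : π ≠ σ)
    (hav1 : Avoids σ perm4231) (hav2 : Avoids σ perm3412) :
    ∃ i j, i < j ∧ π i < π j ∧ (∃ a, a ≤ i ∧ π j ≤ σ a) ∧ (∃ b, j ≤ b ∧ σ b ≤ π i) := by
  classical
  -- least difference position k
  have hDne : (univ.filter fun i => π i ≠ σ i).Nonempty := by
    by_contra h
    rw [Finset.not_nonempty_iff_eq_empty, Finset.filter_eq_empty_iff] at h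
    exact hne (Equiv.ext fun i => not_ne_iff.mp (h (mem_univ i)))
  set D := univ.filter fun i => π i ≠ σ i with hD
  set k := D.min' hDne with hkdef
  have hkD : k ∈ D := Finset.min'_mem _ _
  have hkne : π k ≠ σ k := (Finset.mem_filter.mp hkD).2
  have hpre : ∀ u, u < k → π u = σ u := by
    intro u hu
    by_contra hc
    have : u ∈ D := by rw [hD, mem_filter]; exact ⟨mem_univ u, hc⟩
    exact absurd (Finset.min'_le _ _ this) (not_le.mpr hu)
  have tool1 : ∀ (u t : Fin N), u < k → ¬ (π t = σ u) ∨ t < k := by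
    intro u t hu
    by_cases ht : t < k
    · right; exact ht
    · left
      intro he
      have : π t = π u := by rw [he, hpre u hu]
      have := π.injective this
      omega
  -- more convenient forms
  have tool1a : ∀ (u t : Fin N), u < k → k ≤ t → π t = σ u → False := by
    intro u t hu ht he
    rcases tool1 u t hu with h | h
    · exact h he
    · omega
  have tool1b : ∀ (u t : Fin N), u < k → k ≤ t → σ t = π u → False := by
    intro u t hu ht he
    have : σ t = σ u := by rw [he, hpre u hu]
    have := σ.injective this
    omega
  rcases lt_trichotomy (π k) (σ k) with hwv | heq | hwv
  · -- LT case
    set q0 := π.symm (σ k) with hq0def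
    have hπq0 : π q0 = σ k := π.apply_symm_apply _
    have hkq0 : k < q0 := by
      rcases lt_trichotomy q0 k with h | h | h
      · exfalso
        have h1 : σ q0 = σ k := by rw [← hpre q0 h, hπq0]
        have := σ.injective h1
        omega
      · exfalso; rw [h] at hπq0; omega
      · exact h
    set J := univ.filter (fun t => k < t ∧ π k < π t ∧ π t ≤ σ k) with hJdef
    have hJne : J.Nonempty :=
      ⟨q0, Finset.mem_filter.mpr ⟨mem_univ q0, hkq0, by rw [hπq0]; exact hwv, le_of_eq hπq0⟩⟩
    set j := J.min' hJne with hjdef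
    have hjmem : k < j ∧ π k < π j ∧ π j ≤ σ k :=
      (Finset.mem_filter.mp (Finset.min'_mem J hJne)).2
    have hjmin : ∀ t, k < t → π k < π t → π t ≤ σ k → j ≤ t := fun t h1 h2 h3 =>
      Finset.min'_le _ _ (Finset.mem_filter.mpr ⟨mem_univ t, h1, h2, h3⟩)
    by_cases hsw : ∃ b, j ≤ b ∧ σ b ≤ π k
    · exact ⟨k, j, hjmem.1, hjmem.2.1, ⟨k, le_refl k, hjmem.2.2⟩, hsw⟩
    exfalso
    push_neg at hsw
    have H3 : ∀ b, j ≤ b → π k < σ b := hsw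
    have H3π : ∀ t, j ≤ t → π k < π t := by
      intro t ht
      obtain ⟨b, hb1, hb2⟩ := (hh t).2
      exact lt_of_lt_of_le (H3 b (ht.trans hb1)) hb2
    -- pp
    set pp := σ.symm (π k) with hppdef
    have hσpp : σ pp = π k := σ.apply_symm_apply _
    have hkpp : k < pp := by
      rcases lt_trichotomy pp k with h | h | h
      · exfalso
        have h1 : π pp = π k := by rw [hpre pp h, hσpp]
        have := π.injective h1
        omega
      · exfalso; rw [h] at hσpp; omega
      · exact h
    have hppj : pp < j := by
      by_contra h
      push_neg at h
      have := H3 pp h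
      rw [hσpp] at this
      omega
    -- tl
    set T := univ.filter (fun t => k < t ∧ σ t < σ k) with hTdef
    have hTne : T.Nonempty :=
      ⟨pp, Finset.mem_filter.mpr ⟨mem_univ pp, hkpp, by rw [hσpp]; exact hwv⟩⟩
    set tl := T.max' hTne with htldef
    have htlmem : k < tl ∧ σ tl < σ k :=
      (Finset.mem_filter.mp (Finset.max'_mem T hTne)).2
    have htlmax : ∀ t, k < t → σ t < σ k → t ≤ tl := fun t h1 h2 =>
      Finset.le_max' _ _ (Finset.mem_filter.mpr ⟨mem_univ t, h1, h2⟩)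
    have hq0tl : q0 ≤ tl := by
      obtain ⟨b, hb1, hb2⟩ := (hh q0).2
      rw [hπq0] at hb2
      have hkb : k < b := lt_of_lt_of_le hkq0 hb1
      have hbv : σ b < σ k := lt_of_le_of_ne hb2 (fun h => by
        have := σ.injective h; omega)
      exact hb1.trans (htlmax b hkb hbv)
    have hjq0 : j ≤ q0 := hjmin q0 hkq0 (by rw [hπq0]; exact hwv) (le_of_eq hπq0)
    have hjtl : j ≤ tl := hjq0.trans hq0tl
    have hzl : π k < σ tl := H3 tl hjtl
    -- branches
    by_cases hL1 : ∃ x, k < x ∧ x < pp ∧ σ k < σ x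
    · obtain ⟨x, h1, h2, h3⟩ := hL1
      exact hav2 (contains3412 σ h1 h2 (lt_of_lt_of_le hppj hjtl)
        (by rw [hσpp]; exact hzl) htlmem.2 h3)
    by_cases hL2 : ∃ x s2, k < x ∧ x < tl ∧ σ k < σ x ∧ s2 < k ∧ σ x < σ s2
    · obtain ⟨x, s2, h1, h2, h3, h4, h5⟩ := hL2
      exact hav1 (contains4231 σ h4 h1 h2 htlmem.2 h3 h5)
    by_cases hL3 : ∃ x u t, k < x ∧ x < u ∧ u < t ∧ σ k < σ x ∧ σ u < σ t ∧ σ t < σ k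
    · obtain ⟨x, u, t, h1, h2, h3, h4, h5, h6⟩ := hL3
      exact hav2 (contains3412 σ h1 h2 h3 h5 h6 h4)
    push_neg at hL1 hL2 hL3
    -- P2: xb
    have hxb : ∃ xb, j ≤ xb ∧ xb < tl ∧ σ k < σ xb := by
      by_contra hxbc
      push_neg at hxbc
      have hallsm : ∀ t, j ≤ t → t ≤ tl → σ t < σ k := by
        intro t h1 h2
        rcases eq_or_lt_of_le h2 with rfl | h2
        · exact htlmem.2
        · have hle := hxbc t h1 h2
          have hne1 : σ t ≠ σ k := fun h => by
            have := σ.injective h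
            have h3 := hjmem.1
            omega
          omega
      set g := fun t => π.symm (σ t) with hgdef
      have hgmem : ∀ t, j ≤ t → t ≤ tl → (j ≤ g t ∧ g t ≤ tl) := by
        intro t h1 h2
        have hπgt : π (g t) = σ t := π.apply_symm_apply _
        have hsmall : σ t < σ k := hallsm t h1 h2
        have hwlt : π k < σ t := H3 t h1
        have hkt : k < t := lt_of_lt_of_le hjmem.1 h1
        have hkg : k < g t := by
          rcases lt_trichotomy (g t) k with h | h | h
          · exfalso
            have h1' : σ (g t) = σ t := by rw [← hpre _ h, hπgt]
            have := σ.injective h1'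
            omega
          · exfalso; rw [h] at hπgt; omega
          · exact h
        have hjg : j ≤ g t := hjmin (g t) hkg (by rw [hπgt]; exact hwlt)
          (by rw [hπgt]; exact le_of_lt hsmall)
        obtain ⟨b, hb1, hb2⟩ := (hh (g t)).2
        rw [hπgt] at hb2
        have hkb : k < b := lt_of_lt_of_le hkg hb1
        have hbT : b ≤ tl := htlmax b hkb (lt_of_le_of_lt hb2 hsmall)
        exact ⟨hjg, hb1.trans hbT⟩
      set S := Finset.Icc j tl with hSdef
      have hq0S : q0 ∈ S := Finset.mem_Icc.mpr ⟨hjq0, hq0tl⟩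
      have hginjS : Set.InjOn g S := fun a _ b _ h => σ.injective (π.symm.injective h)
      have hq0img : q0 ∉ S.image g := by
        intro hcon
        rw [Finset.mem_image] at hcon
        obtain ⟨t, ht, hgt⟩ := hcon
        have h1 : σ t = σ k := by
          have h2 : π (g t) = π q0 := by rw [hgt]
          rw [π.apply_symm_apply, hπq0] at h2
          exact h2
        have := σ.injective h1
        rw [Finset.mem_Icc] at ht
        have := hjmem.1
        omega
      have hsub : insert q0 (S.image g) ⊆ S := by
        intro x hx
        rw [Finset.mem_insert] at hx
        rcases hx with rfl | hx
        · exact hq0S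
        · rw [Finset.mem_image] at hx
          obtain ⟨t, ht, rfl⟩ := hx
          rw [Finset.mem_Icc] at ht
          exact Finset.mem_Icc.mpr (hgmem t ht.1 ht.2)
      have hcard := Finset.card_le_card hsub
      rw [Finset.card_insert_of_notMem hq0img, Finset.card_image_of_injOn hginjS] at hcard
      omega
    obtain ⟨xb, hxb1, hxb2, hxb3⟩ := hxb
    have hkxb : k < xb := lt_of_lt_of_le hjmem.1 hxb1
    -- P4
    by_cases hP4 : ∃ i s', k < i ∧ i < j ∧ s' < k ∧ σ k < π i ∧ π i ≤ σ s'
    · obtain ⟨i, s', h1, h2, h3, h4, h5⟩ := hP4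
      set y := σ.symm (π i) with hydef
      have hσy : σ y = π i := σ.apply_symm_apply _
      have hky : k < y := by
        rcases lt_trichotomy y k with h | h | h
        · exfalso
          have h1' : π y = π i := by rw [hpre y h, hσy]
          have := π.injective h1'
          omega
        · exfalso; rw [h] at hσy; omega
        · exact h
      have hys' : σ y < σ s' := by
        rw [hσy]
        refine lt_of_le_of_ne h5 (fun h => ?_)
        have : σ y = σ s' := by rw [hσy, h]
        have := σ.injective this
        omega
      have hytl : y ≠ tl := by
        intro h
        rw [h] at hσy
        have := htlmem.2
        omega
      rcases lt_or_gt_of_ne hytl with h | h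
      · have := hL2 y s' hky h (by rw [hσy]; exact h4) h3
        omega
      · have hs'xb : s' < xb := h3.trans hkxb
        have hσs'xb : σ s' < σ xb := by
          have hle := hL2 xb s' hkxb hxb2 hxb3 h3
          refine lt_of_le_of_ne hle (fun he => ?_)
          have := σ.injective he
          omega
        exact hav2 (contains3412 σ hs'xb hxb2 h
          (by rw [hσy]; exact lt_trans htlmem.2 h4) hys' hσs'xb)
    push_neg at hP4
    -- (b) mid big exists
    have hmid : ∃ i0, k < i0 ∧ i0 < j ∧ σ k < π i0 := by
      by_contra hc
      push_neg at hc
      have hdich : ∀ i, k < i → i < j → π i < π k := by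
        intro i h1 h2
        have hle : π i ≤ σ k := hc i h1 h2
        have hne1 : π i ≠ π k := fun h => by
          have := π.injective h; omega
        by_contra hcon
        push_neg at hcon
        have hlt : π k < π i := lt_of_le_of_ne hcon (fun h => hne1 h.symm)
        exact absurd (hjmin i h1 hlt hle) (not_le.mpr h2)
      have hppIoo : pp ∈ Finset.Ioo k j := Finset.mem_Ioo.mpr ⟨hkpp, hppj⟩
      set g2 := fun i => σ.symm (π i) with hg2def
      have hg2 : ∀ i ∈ Finset.Ioo k j, g2 i ∈ (Finset.Ioo k j).erase pp := by
        intro i hi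
        obtain ⟨hi1, hi2⟩ := Finset.mem_Ioo.mp hi
        have hσg2 : σ (g2 i) = π i := σ.apply_symm_apply _
        have hπsm : π i < π k := hdich i hi1 hi2
        refine Finset.mem_erase.mpr ⟨?_, Finset.mem_Ioo.mpr ⟨?_, ?_⟩⟩
        · intro h
          rw [h, hσpp] at hσg2
          omega
        · rcases lt_trichotomy (g2 i) k with h | h | h
          · exfalso
            have h1' : π (g2 i) = π i := by rw [hpre _ h, hσg2]
            have := π.injective h1'
            omega
          · exfalso; rw [h] at hσg2; omega
          · exact h
        · by_contra hcon
          push_neg at hcon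
          have := H3 (g2 i) hcon
          rw [hσg2] at this
          omega
      have hinj2 : Set.InjOn g2 (Finset.Ioo k j) := fun a _ b _ h =>
        π.injective (σ.symm.injective h)
      have hcard := Finset.card_le_card_of_injOn g2 hg2 hinj2
      rw [Finset.card_erase_of_mem hppIoo] at hcard
      have hpos : 0 < (Finset.Ioo k j).card := Finset.card_pos.mpr ⟨pp, hppIoo⟩
      omega
    obtain ⟨i0, hi01, hi02, hi03⟩ := hmid
    -- x1
    have hB1ex : ∃ a, k < a ∧ a < j ∧ σ k < σ a := by
      obtain ⟨a, ha1, ha2⟩ := (hh i0).1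
      have hva : σ k < σ a := lt_of_lt_of_le hi03 ha2
      have hak : a ≠ k := fun h => by rw [h] at hva; omega
      rcases lt_or_gt_of_ne hak with h | h
      · exfalso
        have := hP4 i0 a hi01 hi02 h hi03
        omega
      · exact ⟨a, h, lt_of_le_of_lt ha1 hi02, hva⟩
    set B1 := (Finset.Ioo k j).filter (fun u => σ k < σ u) with hB1def
    have hB1ne : B1.Nonempty := by
      obtain ⟨a, h1, h2, h3⟩ := hB1ex
      exact ⟨a, Finset.mem_filter.mpr ⟨Finset.mem_Ioo.mpr ⟨h1, h2⟩, h3⟩⟩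
    set x1 := B1.min' hB1ne with hx1def
    have hx1mem' := Finset.mem_filter.mp (Finset.min'_mem B1 hB1ne)
    have hx1Ioo := Finset.mem_Ioo.mp hx1mem'.1
    have hx1v : σ k < σ x1 := hx1mem'.2
    have hx1min : ∀ u, k < u → u < j → σ k < σ u → x1 ≤ u := by
      intro u h1 h2 h3
      exact Finset.min'_le B1 u (Finset.mem_filter.mpr ⟨Finset.mem_Ioo.mpr ⟨h1, h2⟩, h3⟩)
    have hppx1 : pp < x1 := by
      have hne' : x1 ≠ pp := by
        intro h
        rw [h] at hx1v
        rw [hσpp] at hx1v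
        omega
      rcases lt_or_gt_of_ne hne' with h | h
      · exfalso
        have := hL1 x1 hx1Ioo.1 h
        omega
      · exact h
    -- (c)
    have hcsm : ∀ i, k < i → i < x1 → π i < π k := by
      intro i h1 h2
      have hij : i < j := h2.trans hx1Ioo.2
      have hne1 : π i ≠ π k := fun h => by
        have := π.injective h; omega
      by_contra hcon
      push_neg at hcon
      have hwlt : π k < π i := lt_of_le_of_ne hcon (fun h => hne1 h.symm)
      by_cases hle : π i ≤ σ k
      · exact absurd (hjmin i h1 hwlt hle) (not_le.mpr hij)
      · push_neg at hle
        obtain ⟨a, ha1, ha2⟩ := (hh i).1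
        have hva : σ k < σ a := lt_of_lt_of_le hle ha2
        have hak : a ≠ k := fun h => by rw [h] at hva; omega
        rcases lt_or_gt_of_ne hak with h | h
        · have := hP4 i a h1 hij h hle
          omega
        · exact absurd (hx1min a h (lt_of_le_of_lt ha1 hij) hva)
            (not_le.mpr (lt_of_le_of_lt ha1 h2))
    -- (d)
    set S1 := (Finset.Ioo k j).filter (fun u => σ u < π k) with hS1def
    set S2 := (Finset.Ioo k j).filter (fun i => π i < π k) with hS2def
    have hS12 : S1.card = S2.card := by
      apply Finset.card_nbij' (fun u => π.symm (σ u)) (fun i => σ.symm (π i))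
      · intro u hu
        have hu' := Finset.mem_filter.mp hu
        have huI := Finset.mem_Ioo.mp hu'.1
        have hπt : π (π.symm (σ u)) = σ u := π.apply_symm_apply _
        refine Finset.mem_coe.mpr (Finset.mem_filter.mpr ⟨Finset.mem_Ioo.mpr ⟨?_, ?_⟩, ?_⟩)
        · rcases lt_trichotomy (π.symm (σ u)) k with h | h | h
          · exfalso
            have h1' : σ (π.symm (σ u)) = σ u := by rw [← hpre _ h, hπt]
            have := σ.injective h1'
            omega
          · exfalso; rw [h] at hπt; omega
          · exact h
        · by_contra hcon
          push_neg at hcon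
          have := H3π (π.symm (σ u)) hcon
          rw [hπt] at this
          exact absurd hu'.2 (not_lt.mpr (le_of_lt this))
        · rw [hπt]; exact hu'.2
      · intro i hi
        have hi' := Finset.mem_filter.mp hi
        have hiI := Finset.mem_Ioo.mp hi'.1
        have hσt : σ (σ.symm (π i)) = π i := σ.apply_symm_apply _
        refine Finset.mem_coe.mpr (Finset.mem_filter.mpr ⟨Finset.mem_Ioo.mpr ⟨?_, ?_⟩, ?_⟩)
        · rcases lt_trichotomy (σ.symm (π i)) k with h | h | h
          · exfalso
            have h1' : π (σ.symm (π i)) = π i := by rw [hpre _ h, hσt]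
            have := π.injective h1'
            omega
          · exfalso; rw [h] at hσt; omega
          · exact h
        · by_contra hcon
          push_neg at hcon
          have := H3 (σ.symm (π i)) hcon
          rw [hσt] at this
          exact absurd hi'.2 (not_lt.mpr (le_of_lt this))
        · rw [hσt]; exact hi'.2
      · intro u hu
        simp
      · intro i hi
        simp
    have hppIoo2 : pp ∈ Finset.Ioo k x1 := Finset.mem_Ioo.mpr ⟨hkpp, hppx1⟩
    have hsub2 : Finset.Ioo k x1 ⊆ S2 := by
      intro i hi
      have hiI := Finset.mem_Ioo.mp hi
      exact Finset.mem_filter.mpr ⟨Finset.mem_Ioo.mpr ⟨hiI.1, hiI.2.trans hx1Ioo.2⟩,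
        hcsm i hiI.1 hiI.2⟩
    have hex : ∃ u, (u ∈ S1) ∧ x1 < u := by
      by_contra hcon
      push_neg at hcon
      have hS1sub : S1 ⊆ (Finset.Ioo k x1).erase pp := by
        intro u hu
        have hu' := Finset.mem_filter.mp hu
        have huI := Finset.mem_Ioo.mp hu'.1
        have hne' : u ≠ x1 := by
          intro h
          rw [h] at hu'
          have := hu'.2
          omega
        refine Finset.mem_erase.mpr ⟨?_, Finset.mem_Ioo.mpr ⟨huI.1,
          lt_of_le_of_ne (hcon u hu) hne'⟩⟩
        intro h
        have := hu'.2
        rw [h, hσpp] at this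
        omega
      have h1 := Finset.card_le_card hS1sub
      rw [Finset.card_erase_of_mem hppIoo2] at h1
      have h2 := Finset.card_le_card hsub2
      have h3 : 0 < (Finset.Ioo k x1).card := Finset.card_pos.mpr ⟨pp, hppIoo2⟩
      omega
    obtain ⟨u, huS1, hux1⟩ := hex
    have hu' := Finset.mem_filter.mp huS1
    have huIoo := Finset.mem_Ioo.mp hu'.1
    have hfinal := hL3 x1 u tl hx1Ioo.1 hux1 (lt_of_lt_of_le huIoo.2 hjtl) hx1v
      (lt_trans hu'.2 hzl)
    have := htlmem.2
    omega
  · exact absurd heq hkne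
  · -- GT case
    exfalso
    -- prefix big s2
    obtain ⟨s2, hs2k, hs2v⟩ : ∃ s2, s2 < k ∧ π k < σ s2 := by
      obtain ⟨a, ha1, ha2⟩ := (hh k).1
      have hak : a ≠ k := by
        intro h; subst h; omega
      have hak' : a < k := lt_of_le_of_ne ha1 hak
      refine ⟨a, hak', lt_of_le_of_ne ha2 ?_⟩
      intro h
      have h1 : π a = π k := by rw [hpre a hak', ← h]
      have := π.injective h1
      omega
    -- p := position of w in σ
    set p := σ.symm (π k) with hp
    have hσp : σ p = π k := σ.apply_symm_apply _
    have hkp : k < p := by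
      rcases lt_trichotomy p k with h | h | h
      · exfalso
        have h1 : π p = π k := by rw [hpre p h, hσp]
        have := π.injective h1
        omega
      · exfalso; rw [h] at hσp; omega
      · exact h
    -- nonempty smalls
    have hNSm : ∃ b, k < b ∧ σ b < σ k := by
      set q := π.symm (σ k) with hq
      have hπq : π q = σ k := π.apply_symm_apply _
      have hkq : k < q := by
        rcases lt_trichotomy q k with h | h | h
        · exfalso
          have h1 : σ q = σ k := by rw [← hpre q h, hπq]
          have := σ.injective h1
          omega
        · exfalso; rw [h] at hπq; omega
        · exact h
      obtain ⟨b, hb1, hb2⟩ := (hh q).2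
      rw [hπq] at hb2
      have hbk : k < b := lt_of_lt_of_le hkq hb1
      refine ⟨b, hbk, lt_of_le_of_ne hb2 ?_⟩
      intro h
      exact absurd (σ.injective h) (by omega)
    -- G1
    by_cases hG1 : ∃ t, p < t ∧ σ t < σ k
    · obtain ⟨t, ht1, ht2⟩ := hG1
      exact hav1 (contains4231 σ hs2k hkp ht1 ht2 (by omega) (by rw [hσp]; exact hs2v))
    push_neg at hG1
    -- tmax
    set NSm := univ.filter (fun t => k < t ∧ σ t < σ k) with hNSmdef
    have hNSmne : NSm.Nonempty := by
      obtain ⟨b, hb1, hb2⟩ := hNSm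
      exact ⟨b, by rw [hNSmdef, mem_filter]; exact ⟨mem_univ b, hb1, hb2⟩⟩
    set tmax := NSm.max' hNSmne with htmaxdef
    have htmaxmem : k < tmax ∧ σ tmax < σ k :=
      (Finset.mem_filter.mp (Finset.max'_mem NSm hNSmne)).2
    have htmaxmax : ∀ t, k < t → σ t < σ k → t ≤ tmax := by
      intro t h1 h2
      exact Finset.le_max' _ _ (by rw [hNSmdef, mem_filter]; exact ⟨mem_univ t, h1, h2⟩)
    have htmaxp : tmax < p := by
      have h1 : ¬ (p < tmax) := fun h => absurd (hG1 tmax h) (by omega)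
      have h2 : tmax ≠ p := by
        intro h
        have := htmaxmem.2
        rw [h, hσp] at this
        omega
      omega
    -- G*
    by_cases hGs : ∃ c, k < c ∧ c < tmax ∧ σ k < σ c
    · obtain ⟨c, hc1, hc2, hc3⟩ := hGs
      rcases lt_trichotomy (σ c) (σ s2) with h | h | h
      · exact hav1 (contains4231 σ hs2k hc1 hc2 htmaxmem.2 hc3 h)
      · exact absurd (σ.injective h) (by omega)
      · exact hav2 (contains3412 σ (hs2k.trans hc1) hc2 htmaxp
          (by rw [hσp]; omega) (by rw [hσp]; exact hs2v) h)
    push_neg at hGs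
    -- closing pigeonhole
    have hsm : ∀ t, k < t → t ≤ tmax → σ t < σ k := by
      intro t h1 h2
      rcases eq_or_lt_of_le h2 with rfl | h2
      · exact htmaxmem.2
      · have := hGs t h1 h2
        have hne' : σ t ≠ σ k := fun h => absurd (σ.injective h) (by omega)
        omega
    have hbig : ∀ t, tmax < t → σ k < σ t := by
      intro t h1
      by_contra hc
      push_neg at hc
      have hk : k < t := htmaxmem.1.trans h1
      have hne' : σ t ≠ σ k := fun h => absurd (σ.injective h) (by omega)
      have : σ t < σ k := by omega
      exact absurd (htmaxmax t hk this) (by omega)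
    have hπbig : ∀ t, tmax < t → σ k < π t := by
      intro t h1
      obtain ⟨b, hb1, hb2⟩ := (hh t).2
      exact lt_of_lt_of_le (hbig b (h1.trans_le hb1)) hb2
    -- injection
    set S := Finset.Ioc k tmax with hSdef
    set g : Fin N → Fin N := fun t => π.symm (σ t) with hg
    have hgS : ∀ t ∈ S, g t ∈ S := by
      intro t ht
      rw [hSdef, mem_Ioc] at ht ⊢
      have hπgt : π (g t) = σ t := π.apply_symm_apply _
      have hσtv : σ t < σ k := hsm t ht.1 ht.2
      constructor
      · -- k < g t
        rcases lt_trichotomy (g t) k with h | h | h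
        · exfalso
          have h1 : σ (g t) = σ t := by rw [← hpre (g t) h, hπgt]
          have := σ.injective h1
          omega
        · exfalso
          rw [h] at hπgt
          omega
        · exact h
      · -- g t ≤ tmax
        by_contra hcon
        push_neg at hcon
        have := hπbig (g t) hcon
        rw [hπgt] at this
        omega
    have hginj : Set.InjOn g S := by
      intro a _ b _ hab
      have : σ a = σ b := π.symm.injective hab
      exact σ.injective this
    -- q
    set q := π.symm (σ k) with hq
    have hπq : π q = σ k := π.apply_symm_apply _
    have hqS : q ∈ S := by
      rw [hSdef, mem_Ioc]
      constructor
      · rcases lt_trichotomy q k with h | h | h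
        · exfalso
          have h1 : σ q = σ k := by rw [← hpre q h, hπq]
          have := σ.injective h1
          omega
        · exfalso; rw [h] at hπq; omega
        · exact h
      · by_contra hcon
        push_neg at hcon
        have := hπbig q hcon
        omega
    have hqim : q ∉ S.image g := by
      intro hcon
      rw [mem_image] at hcon
      obtain ⟨t, ht, hgt⟩ := hcon
      have : σ t = σ k := by
        have : π (g t) = π q := by rw [hgt]
        rw [π.apply_symm_apply, hπq] at this
        exact this
      have := σ.injective this
      rw [hSdef, mem_Ioc] at ht
      omega
    have hsub : insert q (S.image g) ⊆ S := by
      intro x hx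
      rw [mem_insert] at hx
      rcases hx with rfl | hx
      · exact hqS
      · rw [mem_image] at hx
        obtain ⟨t, ht, rfl⟩ := hx
        exact hgS t ht
    have hcard := Finset.card_le_card hsub
    rw [Finset.card_insert_of_notMem hqim, Finset.card_image_of_injOn hginj] at hcard
    omega


-- === main lemma ===
lemma hull_to_bruhat (σ : Equiv.Perm (Fin N))
    (hav1 : Avoids σ perm4231) (hav2 : Avoids σ perm3412) :
    ∀ (m : ℕ) (π : Equiv.Perm (Fin N)), Phi π = m → Hull σ π → BruhatLE π σ := by
  intro m
  induction m using Nat.strong_induction_on with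
  | _ m ih =>
    intro π hm hh
    by_cases hne : π = σ
    · subst hne; exact bruhat_refl π
    · obtain ⟨i, j, hij, hv, hup, hlo⟩ := claimA σ π hh hne hav1 hav2
      set π' := π * Equiv.swap i j with hπ'
      have happ : ∀ k, π' k = π (Equiv.swap i j k) := fun k => rfl
      have hπi : π' i = π j := by rw [happ, Equiv.swap_apply_left]
      have hπj : π' j = π i := by rw [happ, Equiv.swap_apply_right]
      have hh' : Hull σ π' := by
        intro k
        rcases eq_or_ne k i with rfl | hki
        · rw [hπi]
          refine ⟨hup, ?_⟩
          obtain ⟨b, hb1, hb2⟩ := (hh j).2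
          exact ⟨b, (le_of_lt hij).trans hb1, hb2⟩
        rcases eq_or_ne k j with rfl | hkj
        · rw [hπj]
          refine ⟨?_, hlo⟩
          obtain ⟨a, ha1, ha2⟩ := (hh i).1
          exact ⟨a, ha1.trans (le_of_lt hij), ha2⟩
        · rw [happ, Equiv.swap_apply_of_ne_of_ne hki hkj]
          exact hh k
      have hdec := phi_swap π hij hv
      rw [hm] at hdec
      exact bruhat_trans (bruhat_swap π hij hv) (ih (Phi π') hdec π' rfl hh')

lemma graph_iff (σ : Equiv.Perm (Fin N))
    (hav1 : Avoids σ perm4231) (hav2 : Avoids σ perm3412) (π : Equiv.Perm (Fin N)) :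
    (∀ i, (i, π i) ∈ Gamma σ) ↔ BruhatLE π σ := by
  constructor
  · intro h
    apply hull_to_bruhat σ hav1 hav2 (Phi π) π rfl
    intro i
    obtain ⟨σ', hb, he⟩ := h i
    constructor
    · obtain ⟨a, ha1, ha2⟩ := hull_upper hb i
      exact ⟨a, ha1, by rwa [he] at ha2⟩
    · obtain ⟨b, hb1, hb2⟩ := hull_lower hb i
      exact ⟨b, hb1, by rwa [he] at hb2⟩
  · intro h i
    exact ⟨π, h, rfl⟩

end

/-- Proposition 4.2 (prop_RCH, after Sjöstrand and Chepuri–Sherman-Bennett): if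
`σ ∈ S_N` avoids the patterns `4231` and `3412`, then for any `N × N` matrix `M` over a
commutative ring,
`det(M|_{Γ[id,σ]}) = Σ_{σ' ≤ σ} sgn(σ') · m_{1,σ'(1)} ⋯ m_{N,σ'(N)}`,
the sum being over the Bruhat interval `[id, σ]`. -/
theorem statement10 {N : ℕ} {R : Type*} [CommRing R]
    (σ : Equiv.Perm (Fin N))
    (hav1 : Avoids σ perm4231) (hav2 : Avoids σ perm3412)
    (M : Matrix (Fin N) (Fin N) R) :
    (restrictGamma M σ).det =
      ∑ σ' ∈ Finset.univ.filter (fun σ' : Equiv.Perm (Fin N) => BruhatLE σ' σ),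
        (Equiv.Perm.sign σ' : ℤ) • ∏ i : Fin N, M i (σ' i) := by

  classical
  rw [← Matrix.det_transpose, Matrix.det_apply]
  have hterm : ∀ σ' : Equiv.Perm (Fin N),
      (∏ i : Fin N, (restrictGamma M σ).transpose (σ' i) i)
      = if (∀ i, (i, σ' i) ∈ Gamma σ) then ∏ i : Fin N, M i (σ' i) else 0 := by
    intro σ'
    by_cases hc : ∀ i, (i, σ' i) ∈ Gamma σ
    · rw [if_pos hc]
      apply Finset.prod_congr rfl
      intro i _
      show restrictGamma M σ i (σ' i) = M i (σ' i)
      simp only [restrictGamma, Matrix.of_apply, if_pos (hc i)]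
    · rw [if_neg hc]
      push_neg at hc
      obtain ⟨i, hi⟩ := hc
      apply Finset.prod_eq_zero (Finset.mem_univ i)
      show restrictGamma M σ i (σ' i) = 0
      simp only [restrictGamma, Matrix.of_apply, if_neg hi]
  calc ∑ σ' : Equiv.Perm (Fin N), Equiv.Perm.sign σ' • ∏ i : Fin N, (restrictGamma M σ).transpose (σ' i) i
      = ∑ σ' : Equiv.Perm (Fin N),
          (if BruhatLE σ' σ then (Equiv.Perm.sign σ' : ℤ) • ∏ i : Fin N, M i (σ' i) else 0) := by
        apply Finset.sum_congr rfl
        intro σ' _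
        rw [hterm σ']
        have hiff := graph_iff σ hav1 hav2 σ'
        by_cases hb : BruhatLE σ' σ
        · rw [if_pos (hiff.mpr hb), if_pos hb, Units.smul_def]
        · rw [if_neg (fun hc => hb (hiff.mp hc)), if_neg hb, smul_zero]
    _ = ∑ σ' ∈ Finset.univ.filter (fun σ' : Equiv.Perm (Fin N) => BruhatLE σ' σ),
          (Equiv.Perm.sign σ' : ℤ) • ∏ i : Fin N, M i (σ' i) := by
        rw [Finset.sum_filter]
end

section
/- Let m = Δ_1 + ⋯ + Δ_N be a regular multisegment with Δ_i = [a_i; b_i] and b_1 > b_2 > ⋯ > b_N, whose associated permutation σ = σ_m avoids the pattern 4231. Let I = {i : a_N ≤ a_i and b_i ≤ b_{σ(N)}}. Then the multisegment consisting of the segments Δ_i with i ∈ I is a ladder. -/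
/-!
Order the segments by index, so that the ends decrease, and rank them by `σ⁻¹`, so that the
beginnings increase. Membership in `I` says `σ⁻¹(N) ≤ σ⁻¹(i)` and `σ(N) ≤ i`. If two members
`i < j` of `I` had `a_i < a_j`, the positions `σ⁻¹(N) < σ⁻¹(i) < σ⁻¹(j) < N` would carry the
values `N, i, j, σ(N)`, and `σ(N) < i < j < N` makes this an occurrence of `4231`.
-/

namespace Equiv.Perm

variable {N : ℕ}

theorem containsPattern_perm4231 (σ : Perm (Fin N)) {p₀ p₁ p₂ p₃ : Fin N}
    (h₀₁ : p₀ < p₁) (h₁₂ : p₁ < p₂) (h₂₃ : p₂ < p₃)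
    (hv₃₁ : σ p₃ < σ p₁) (hv₁₂ : σ p₁ < σ p₂) (hv₂₀ : σ p₂ < σ p₀) :
    ContainsPattern σ perm4231 := by
  refine ⟨OrderEmbedding.ofStrictMono ![p₀, p₁, p₂, p₃] ?_, ?_⟩
  · refine Fin.strictMono_iff_lt_succ.2 fun k => ?_
    fin_cases k <;> assumption
  · simp only [Fin.lt_def] at *
    intro s t
    fin_cases s <;> fin_cases t <;> simp [perm4231, Equiv.swap_apply_def] <;> omega

theorem symm_lt_symm_of_avoids_perm4231 {n : ℕ} {σ : Perm (Fin (n + 1))}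
    (hav : Avoids σ perm4231) {i j : Fin (n + 1)} (hij : i < j)
    (hσi : σ (Fin.last n) ≤ i) (hσj : σ.symm (Fin.last n) ≤ σ.symm i) :
    σ.symm j < σ.symm i := by
  by_contra! hji
  have hpij : σ.symm i < σ.symm j := lt_of_le_of_ne hji (σ.symm.injective.ne hij.ne)
  have hp₀ : σ.symm (Fin.last n) < σ.symm i :=
    lt_of_le_of_ne hσj <| σ.symm.injective.ne (hij.trans_le (Fin.le_last j)).ne'
  have hp₃ : σ.symm j < Fin.last n := by
    refine lt_of_le_of_ne (Fin.le_last _) fun h => ?_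
    rw [σ.symm_apply_eq.1 h] at hij
    exact hσi.not_gt hij
  have hv₃ : σ (Fin.last n) < i := by
    refine lt_of_le_of_ne hσi fun h => ?_
    rw [← h, σ.symm_apply_apply] at hpij
    exact (Fin.le_last _).not_gt hpij
  have hv₀ : j < Fin.last n := by
    refine lt_of_le_of_ne (Fin.le_last j) fun h => ?_
    rw [h] at hpij
    exact hσj.not_gt hpij
  refine hav (containsPattern_perm4231 σ hp₀ hpij hp₃ ?_ ?_ ?_) <;>
    simpa only [apply_symm_apply]

end Equiv.Perm

theorem isLadder_of_strictAntiOn {ι : Type*} [LinearOrder ι] (Δ : ι → Segment) (S : Finset ι)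
    (ha : StrictAntiOn (fun i => (Δ i).a) S) (hb : StrictAntiOn (fun i => (Δ i).b) S) :
    IsLadder Δ S := by
  refine ⟨(S.orderIsoOfFin rfl).toEquiv, fun k l hkl => ?_⟩
  have hlt := (S.orderIsoOfFin rfl).strictMono hkl
  exact ⟨ha (S.orderIsoOfFin rfl k).2 (S.orderIsoOfFin rfl l).2 hlt,
    hb (S.orderIsoOfFin rfl k).2 (S.orderIsoOfFin rfl l).2 hlt⟩

/-- Let `m = Δ_1 + ⋯ + Δ_N` be a regular multisegment with `b_1 > ⋯ > b_N` whose
associated permutation `σ` avoids the pattern `4231`, and let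
`I = {i : a_N ≤ a_i and b_i ≤ b_{σ(N)}}`. Then the multisegment consisting of the
segments `Δ_i` with `i ∈ I` is a ladder. (Indices are 0-based: `Δ_N` is index `N-1`.) -/
theorem statement13 {N : ℕ} (hN : 0 < N) (Δ : Fin N → Segment)
    (hb : ∀ i j : Fin N, i < j → (Δ j).b < (Δ i).b)
    (σ : Equiv.Perm (Fin N))
    (hσ : ∀ i j : Fin N, i < j → (Δ (σ i)).a < (Δ (σ j)).a)
    (hav : Avoids σ perm4231) :
    IsLadder Δ (Finset.univ.filter fun i =>
      (Δ ⟨N - 1, by omega⟩).a ≤ (Δ i).a ∧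
      (Δ i).b ≤ (Δ (σ ⟨N - 1, by omega⟩)).b) := by
  obtain ⟨n, rfl⟩ := Nat.exists_eq_add_one_of_ne_zero hN.ne'
  have hlast : (⟨n + 1 - 1, by omega⟩ : Fin (n + 1)) = Fin.last n := Fin.ext (by simp)
  have hb_le_iff (x y : Fin (n + 1)) : (Δ x).b ≤ (Δ y).b ↔ y ≤ x :=
    StrictAnti.le_iff_ge (f := fun i => (Δ i).b) hb
  have ha_le_iff (x y : Fin (n + 1)) : (Δ x).a ≤ (Δ y).a ↔ σ.symm x ≤ σ.symm y := by
    simpa only [Equiv.apply_symm_apply] using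
      StrictMono.le_iff_le (f := fun k => (Δ (σ k)).a) hσ (a := σ.symm x) (b := σ.symm y)
  simp only [hlast]
  refine isLadder_of_strictAntiOn Δ _ (fun i hi j _ hij => ?_) (fun i _ j _ => hb i j)
  simp only [Finset.coe_filter, Finset.mem_univ, true_and, Set.mem_ofPred_eq, ha_le_iff,
    hb_le_iff] at hi
  exact lt_of_not_ge fun h => ((ha_le_iff i j).1 h).not_gt <|
    σ.symm_lt_symm_of_avoids_perm4231 hav hij hi.2 hi.1
end
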